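/- arXiv:2604.03399 — 16 statements merged into one kernel-verified Lean document; each statement's English description precedes it below -/
import Mathlib

section
/- Let γ > 0 and let Q : H →L[ℝ] H be a positive operator. Assume (a) B* ∘ Q ∘ B ⪯ id_E, (b) A* ∘ Q ∘ T + T* ∘ Q ∘ A ⪯ 0, and (c) C* ∘ C ⪯ γ² • (T* ∘ Q ∘ T). Then for every v ∈ E and every primal trajectory x with initial data v, one has ‖C (x t)‖ ≤ γ · ‖v‖ for all t ≥ 0. (Theorem 2(i): coercive Lyapunov certificate for the impulse-to-peak bound of the primal auxiliary PIE.) -/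
open ContinuousLinearMap
open scoped RealInnerProductSpace

/-- Theorem 2(i): coercive Lyapunov certificate for the impulse-to-peak bound of the
primal auxiliary PIE. -/
theorem stmt_0
    {H E F : Type*}
    [NormedAddCommGroup H] [InnerProductSpace ℝ H] [CompleteSpace H]
    [NormedAddCommGroup E] [InnerProductSpace ℝ E] [FiniteDimensional ℝ E]
    [NormedAddCommGroup F] [InnerProductSpace ℝ F] [FiniteDimensional ℝ F]
    (T A : H →L[ℝ] H) (B : E →L[ℝ] H) (C : H →L[ℝ] F)
    (γ : ℝ) (hγ : 0 < γ)
    (Q : H →L[ℝ] H) (hQpos : Q.IsPositive)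
    (ha : (ContinuousLinearMap.id ℝ E - adjoint B ∘L Q ∘L B).IsPositive)
    (hb : ((0 : H →L[ℝ] H) - (adjoint A ∘L Q ∘L T + adjoint T ∘L Q ∘L A)).IsPositive)
    (hc : ((γ ^ 2) • (adjoint T ∘L Q ∘L T) - adjoint C ∘L C).IsPositive)
    (v : E) (x : ℝ → H)
    (hx : ∀ t ≥ (0 : ℝ), HasDerivAt (fun s => T (x s)) (A (x t)) t)
    (hx0 : T (x 0) = B v) :
    ∀ t ≥ (0 : ℝ), ‖C (x t)‖ ≤ γ * ‖v‖ := by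
  intro t ht
  set g : ℝ → ℝ := fun s => ⟪Q (T (x s)), T (x s)⟫ with hgdef
  have hderiv : ∀ s ≥ (0 : ℝ),
      HasDerivAt g (⟪Q (T (x s)), A (x s)⟫ + ⟪Q (A (x s)), T (x s)⟫) s := by
    intro s hs
    have h1 := hx s hs
    have h2 : HasDerivAt (fun u => Q (T (x u))) (Q (A (x s))) s :=
      Q.hasFDerivAt.comp_hasDerivAt s h1
    exact h2.inner ℝ h1
  have hderiv_nonpos : ∀ s ≥ (0 : ℝ),
      ⟪Q (T (x s)), A (x s)⟫ + ⟪Q (A (x s)), T (x s)⟫ ≤ 0 := by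
    intro s hs
    have := hb.inner_nonneg_left (x s)
    simp only [sub_apply, add_apply, comp_apply, zero_apply, inner_zero_left, inner_sub_left, inner_add_left,
      adjoint_inner_left, RCLike.re_to_real] at this
    have h1 : ⟪Q (T (x s)), A (x s)⟫ = ⟪A (x s), Q (T (x s))⟫ := real_inner_comm _ _
    have h2 : ⟪Q (A (x s)), T (x s)⟫ = ⟪T (x s), Q (A (x s))⟫ := real_inner_comm _ _
    linarith [this]
  have hmono : g t ≤ g 0 := by
    rcases eq_or_lt_of_le ht with rfl | ht'
    · exact le_refl _
    have hanti : AntitoneOn g (Set.Icc 0 t) := by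
      apply antitoneOn_of_deriv_nonpos (convex_Icc 0 t)
      · intro s hs
        exact ((hderiv s hs.1).continuousAt).continuousWithinAt
      · intro s hs
        rw [interior_Icc] at hs
        exact (hderiv s hs.1.le).differentiableAt.differentiableWithinAt
      · intro s hs
        rw [interior_Icc] at hs
        rw [(hderiv s hs.1.le).deriv]
        exact hderiv_nonpos s hs.1.le
    exact hanti (Set.left_mem_Icc.2 ht) (Set.right_mem_Icc.2 ht) ht
  have hg0 : g 0 ≤ ‖v‖ ^ 2 := by
    have := ha.inner_nonneg_left v
    simp only [sub_apply, comp_apply, id_apply, inner_sub_left, adjoint_inner_left,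
      RCLike.re_to_real] at this
    have h1 : ⟪Q (B v), B v⟫ = ⟪B v, Q (B v)⟫ := real_inner_comm _ _
    have h2 : ⟪v, v⟫ = ‖v‖ ^ 2 := real_inner_self_eq_norm_sq v
    simp only [hgdef, hx0]
    linarith
  have hCt : ‖C (x t)‖ ^ 2 ≤ γ ^ 2 * g t := by
    have := hc.inner_nonneg_left (x t)
    simp only [sub_apply, smul_apply, comp_apply, inner_sub_left, inner_smul_left, conj_trivial,
      adjoint_inner_left, RCLike.re_to_real] at this
    have h1 : ⟪C (x t), C (x t)⟫ = ‖C (x t)‖ ^ 2 := real_inner_self_eq_norm_sq _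
    have h2 : ⟪Q (T (x t)), T (x t)⟫ = ⟪T (x t), Q (T (x t))⟫ := real_inner_comm _ _
    simp only [hgdef]
    nlinarith [this]
  have hfin : ‖C (x t)‖ ^ 2 ≤ (γ * ‖v‖) ^ 2 := by
    have := mul_le_mul_of_nonneg_left (hmono.trans hg0) (sq_nonneg γ)
    calc ‖C (x t)‖ ^ 2 ≤ γ ^ 2 * g t := hCt
      _ ≤ γ ^ 2 * ‖v‖ ^ 2 := this
      _ = (γ * ‖v‖) ^ 2 := by ring
  have h1 := Real.sqrt_le_sqrt hfin
  rwa [Real.sqrt_sq (norm_nonneg _), Real.sqrt_sq (by positivity)] at h1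
end

section
/- Let γ > 0 and let Q : H →L[ℝ] H be a positive operator. Assume (a) C ∘ Q ∘ C* ⪯ id_F, (b) A ∘ Q ∘ T* + T ∘ Q ∘ A* ⪯ 0, and (c) B ∘ B* ⪯ γ² • (T ∘ Q ∘ T*). Then for every v̄ ∈ F and every dual trajectory x̄ with initial data v̄, one has ‖B* (x̄ t)‖ ≤ γ · ‖v̄‖ for all t ≥ 0. (Theorem 2(ii), stated for the dual auxiliary PIE: the dual coercive Lyapunov certificate bounds the peak dual output.) -/
open ContinuousLinearMap
open scoped RealInnerProductSpace

/-!
The quadratic form `V x = ⟪T* x, Q T* x⟫` is a Lyapunov function for the dual system: along a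
dual trajectory its derivative is `2 ⟪A* x, Q T* x⟫ = ⟪(A Q T* + T Q A*) x, x⟫ ≤ 0` by (b).
Hence `V (x̄ t) ≤ V (x̄ 0) = ⟪C* v̄, Q C* v̄⟫ ≤ ‖v̄‖²` by (a), while (c) gives
`‖B* x̄ t‖² ≤ γ² V (x̄ t)`.
-/

section

variable {H K : Type*} [NormedAddCommGroup H] [InnerProductSpace ℝ H] [CompleteSpace H]

theorem IsSelfAdjoint.inner_left_eq_inner_right {Q : H →L[ℝ] H} (hQ : IsSelfAdjoint Q)
    (x y : H) : ⟪Q x, y⟫ = ⟪x, Q y⟫ :=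
  hQ.isSymmetric x y

theorem HasDerivAt.inner_apply_self {Q : H →L[ℝ] H} (hQ : IsSelfAdjoint Q) {u : ℝ → H}
    {u' : H} {t : ℝ} (hu : HasDerivAt u u' t) :
    HasDerivAt (fun s => ⟪u s, Q (u s)⟫) (2 * ⟪u', Q (u t)⟫) t := by
  refine (hu.inner ℝ (Q.hasFDerivAt.comp_hasDerivAt t hu)).congr_deriv ?_
  rw [Function.comp_apply, ← hQ.inner_left_eq_inner_right, real_inner_comm]
  ring

namespace ContinuousLinearMap

variable [NormedAddCommGroup K] [InnerProductSpace ℝ K] [CompleteSpace K]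

theorem inner_comp_comp_adjoint_apply_self (P : H →L[ℝ] K) (Q : H →L[ℝ] H) (x : K) :
    ⟪(P ∘L Q ∘L adjoint P) x, x⟫ = ⟪adjoint P x, Q (adjoint P x)⟫ := by
  rw [comp_apply, comp_apply, ← adjoint_inner_right P, real_inner_comm]

theorem inner_add_comp_comp_adjoint_apply_self {Q : H →L[ℝ] H} (hQ : IsSelfAdjoint Q)
    (A T : H →L[ℝ] H) (x : H) :
    ⟪(A ∘L Q ∘L adjoint T + T ∘L Q ∘L adjoint A) x, x⟫ =
      2 * ⟪adjoint A x, Q (adjoint T x)⟫ := by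
  rw [add_apply, inner_add_left, comp_apply, comp_apply, comp_apply, comp_apply,
    ← adjoint_inner_right A, ← adjoint_inner_right T, real_inner_comm (adjoint A x),
    hQ.inner_left_eq_inner_right]
  ring

theorem inner_adjoint_apply_le_norm_sq {C : H →L[ℝ] K} {Q : H →L[ℝ] H}
    (hC : (ContinuousLinearMap.id ℝ K - C ∘L Q ∘L adjoint C).IsPositive) (v : K) :
    ⟪adjoint C v, Q (adjoint C v)⟫ ≤ ‖v‖ ^ 2 := by
  have h := hC.inner_nonneg_left v
  rw [sub_apply, inner_sub_left, id_apply, real_inner_self_eq_norm_sq,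
    inner_comp_comp_adjoint_apply_self] at h
  linarith

theorem norm_adjoint_apply_sq_le {B : K →L[ℝ] H} {T Q : H →L[ℝ] H} {c : ℝ}
    (hB : (c • (T ∘L Q ∘L adjoint T) - B ∘L adjoint B).IsPositive) (x : H) :
    ‖adjoint B x‖ ^ 2 ≤ c * ⟪adjoint T x, Q (adjoint T x)⟫ := by
  have h := hB.inner_nonneg_left x
  rw [sub_apply, inner_sub_left, smul_apply, real_inner_smul_left,
    inner_comp_comp_adjoint_apply_self, comp_apply, ← adjoint_inner_right B,
    real_inner_self_eq_norm_sq] at h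
  linarith

end ContinuousLinearMap

theorem antitoneOn_inner_adjoint_apply_of_dual_trajectory {T A Q : H →L[ℝ] H}
    (hQ : IsSelfAdjoint Q) (hAT : (-(A ∘L Q ∘L adjoint T + T ∘L Q ∘L adjoint A)).IsPositive)
    {x x' : ℝ → H} (hx : ∀ t, HasDerivAt x (x' t) t)
    (hdyn : ∀ t ≥ (0 : ℝ), adjoint T (x' t) = adjoint A (x t)) :
    AntitoneOn (fun t => ⟪adjoint T (x t), Q (adjoint T (x t))⟫) (Set.Ici 0) := by
  have hV : ∀ t, HasDerivAt (fun s => ⟪adjoint T (x s), Q (adjoint T (x s))⟫)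
      (2 * ⟪adjoint T (x' t), Q (adjoint T (x t))⟫) t := fun t =>
    ((adjoint T).hasFDerivAt.comp_hasDerivAt t (hx t)).inner_apply_self hQ
  refine antitoneOn_of_hasDerivWithinAt_nonpos (convex_Ici 0)
    (fun t _ => (hV t).continuousAt.continuousWithinAt) (fun t _ => (hV t).hasDerivWithinAt)
    fun t ht => ?_
  rw [interior_Ici] at ht
  have h := hAT.inner_nonneg_left (x t)
  rw [neg_apply, inner_neg_left, inner_add_comp_comp_adjoint_apply_self hQ] at h
  rw [hdyn t (le_of_lt ht)]
  linarith

end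

/-- Theorem 2(ii), stated for the dual auxiliary PIE: the dual coercive Lyapunov
certificate bounds the peak dual output. -/
theorem stmt_1
    {H E F : Type*}
    [NormedAddCommGroup H] [InnerProductSpace ℝ H] [CompleteSpace H]
    [NormedAddCommGroup E] [InnerProductSpace ℝ E] [FiniteDimensional ℝ E]
    [NormedAddCommGroup F] [InnerProductSpace ℝ F] [FiniteDimensional ℝ F]
    (T A : H →L[ℝ] H) (B : E →L[ℝ] H) (C : H →L[ℝ] F)
    (γ : ℝ) (hγ : 0 < γ)
    (Q : H →L[ℝ] H) (hQpos : Q.IsPositive)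
    (ha : (ContinuousLinearMap.id ℝ F - C ∘L Q ∘L adjoint C).IsPositive)
    (hb : ((0 : H →L[ℝ] H) - (A ∘L Q ∘L adjoint T + T ∘L Q ∘L adjoint A)).IsPositive)
    (hc : ((γ ^ 2) • (T ∘L Q ∘L adjoint T) - B ∘L adjoint B).IsPositive)
    (vb : F) (xb xb' : ℝ → H)
    (hxbderiv : ∀ t : ℝ, HasDerivAt xb (xb' t) t)
    (hxbdyn : ∀ t ≥ (0 : ℝ), adjoint T (xb' t) = adjoint A (xb t))
    (hxb0 : adjoint T (xb 0) = adjoint C vb) :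
    ∀ t ≥ (0 : ℝ), ‖adjoint B (xb t)‖ ≤ γ * ‖vb‖ := by
  intro t ht
  rw [zero_sub] at hb
  have hdecay := antitoneOn_inner_adjoint_apply_of_dual_trajectory hQpos.isSelfAdjoint hb
    hxbderiv hxbdyn Set.self_mem_Ici ht ht
  have hinit := inner_adjoint_apply_le_norm_sq ha vb
  rw [← hxb0] at hinit
  have hsq : ‖adjoint B (xb t)‖ ^ 2 ≤ (γ * ‖vb‖) ^ 2 := calc
    ‖adjoint B (xb t)‖ ^ 2 ≤ γ ^ 2 * ⟪adjoint T (xb t), Q (adjoint T (xb t))⟫ :=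
      norm_adjoint_apply_sq_le hc (xb t)
    _ ≤ γ ^ 2 * ‖vb‖ ^ 2 := by gcongr; exact hdecay.trans hinit
    _ = (γ * ‖vb‖) ^ 2 := by ring
  exact (sq_le_sq₀ (norm_nonneg _) (by positivity)).1 hsq
end

section
/- Let Q : H →L[ℝ] H be self-adjoint with A* ∘ Q ∘ T + T* ∘ Q ∘ A ⪯ 0, and let x : ℝ → H be such that for every t ≥ 0 the map s ↦ T (x s) has derivative A (x t) at t. Then the storage function V(t) := ⟪T (x t), Q (T (x t))⟫ is nonincreasing on [0, ∞): for all 0 ≤ s ≤ t, V(t) ≤ V(s). (Monotonicity of the Lyapunov storage function along solutions of the PIE, used in Theorem 2.) -/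
open ContinuousLinearMap
open scoped RealInnerProductSpace

/-- Monotonicity of the Lyapunov storage function along solutions of the PIE,
used in Theorem 2. -/
theorem stmt_3
    {H : Type*}
    [NormedAddCommGroup H] [InnerProductSpace ℝ H] [CompleteSpace H]
    (T A : H →L[ℝ] H)
    (Q : H →L[ℝ] H) (hQsa : IsSelfAdjoint Q)
    (hb : ((0 : H →L[ℝ] H) - (adjoint A ∘L Q ∘L T + adjoint T ∘L Q ∘L A)).IsPositive)
    (x : ℝ → H)
    (hx : ∀ t ≥ (0 : ℝ), HasDerivAt (fun s => T (x s)) (A (x t)) t) :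
    ∀ s t : ℝ, 0 ≤ s → s ≤ t →
      ⟪T (x t), Q (T (x t))⟫ ≤ ⟪T (x s), Q (T (x s))⟫ := by
  set f : ℝ → ℝ := fun s => ⟪T (x s), Q (T (x s))⟫ with hf
  have hderiv : ∀ t ≥ (0 : ℝ), HasDerivAt f
      (⟪A (x t), Q (T (x t))⟫ + ⟪T (x t), Q (A (x t))⟫) t := by
    intro t ht
    have h1 := hx t ht
    have h2 : HasDerivAt (fun s => Q (T (x s))) (Q (A (x t))) t :=
      Q.hasFDerivAt.comp_hasDerivAt t h1
    simpa [add_comm] using h1.inner ℝ h2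
  have hnonpos : ∀ t ≥ (0 : ℝ),
      ⟪A (x t), Q (T (x t))⟫ + ⟪T (x t), Q (A (x t))⟫ ≤ 0 := by
    intro t _
    have hp := hb.2 (x t)
    simp only [sub_apply, zero_apply, add_apply, comp_apply, RCLike.re_to_real,
      reApplyInnerSelf_apply] at hp
    have h1 : ⟪A (x t), Q (T (x t))⟫ = ⟪(adjoint A) (Q (T (x t))), x t⟫ := by
      rw [adjoint_inner_left]; exact real_inner_comm _ _
    have h2 : ⟪T (x t), Q (A (x t))⟫ = ⟪(adjoint T) (Q (A (x t))), x t⟫ := by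
      rw [adjoint_inner_left]; exact real_inner_comm _ _
    rw [h1, h2, ← inner_add_left]
    have : (0 : ℝ) ≤ ⟪(0 : H) - ((adjoint A) (Q (T (x t))) + (adjoint T) (Q (A (x t)))), x t⟫ := by
      simpa [real_inner_comm] using hp
    rw [zero_sub, inner_neg_left] at this
    linarith
  intro s t hs hst
  have hmono : AntitoneOn f (Set.Ici 0) := by
    apply antitoneOn_of_deriv_nonpos (convex_Ici 0)
    · intro u hu
      exact ((hderiv u hu).continuousAt).continuousWithinAt
    · intro u hu
      rw [interior_Ici] at hu
      exact ((hderiv u (le_of_lt hu)).differentiableAt).differentiableWithinAt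
    · intro u hu
      rw [interior_Ici] at hu
      rw [(hderiv u (le_of_lt hu)).deriv]
      exact hnonpos u (le_of_lt hu)
  exact hmono hs (le_trans hs hst) hst
end

section
/- Let γ > 0 and let Q : H →L[ℝ] H satisfy T* ∘ Q = Q* ∘ T with T* ∘ Q positive. Assume (a) A* ∘ Q + Q* ∘ A ⪯ 0; (b) for all u ∈ F and y ∈ H, γ²·‖u‖² + 2·⟪u, C y⟫ + ⟪y, (Q* ∘ T) y⟫ ≥ 0 (positivity of the block operator [γ²I, C; C*, Q*T]); (c) for all y ∈ H and w ∈ E, ⟪y, (T* ∘ Q) y⟫ + 2·⟪y, Q* (B w)⟫ + ‖w‖² ≥ 0 (positivity of the block operator [T*Q, Q*B; B*Q, I]). Then for every v ∈ E and every strong primal trajectory x with initial data v, one has ‖C (x t)‖ ≤ γ · ‖v‖ for all t ≥ 0. (Theorem 3(i): non-coercive Lyapunov certificate for the impulse-to-peak bound of the primal auxiliary PIE.) -/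
open ContinuousLinearMap
open scoped RealInnerProductSpace

/-- Theorem 3(i): non-coercive Lyapunov certificate for the impulse-to-peak bound of
the primal auxiliary PIE. -/
theorem stmt_4
    {H E F : Type*}
    [NormedAddCommGroup H] [InnerProductSpace ℝ H] [CompleteSpace H]
    [NormedAddCommGroup E] [InnerProductSpace ℝ E] [FiniteDimensional ℝ E]
    [NormedAddCommGroup F] [InnerProductSpace ℝ F] [FiniteDimensional ℝ F]
    (T A : H →L[ℝ] H) (B : E →L[ℝ] H) (C : H →L[ℝ] F)
    (γ : ℝ) (hγ : 0 < γ)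
    (Q : H →L[ℝ] H)
    (hQT : adjoint T ∘L Q = adjoint Q ∘L T)
    (hQTpos : (adjoint T ∘L Q).IsPositive)
    (ha : ((0 : H →L[ℝ] H) - (adjoint A ∘L Q + adjoint Q ∘L A)).IsPositive)
    (hb : ∀ (u : F) (y : H),
      γ ^ 2 * ‖u‖ ^ 2 + 2 * ⟪u, C y⟫ + ⟪y, (adjoint Q ∘L T) y⟫ ≥ 0)
    (hc : ∀ (y : H) (w : E),
      ⟪y, (adjoint T ∘L Q) y⟫ + 2 * ⟪y, adjoint Q (B w)⟫ + ‖w‖ ^ 2 ≥ 0)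
    (v : E) (x x' : ℝ → H)
    (hxderiv : ∀ t : ℝ, HasDerivAt x (x' t) t)
    (hxdyn : ∀ t ≥ (0 : ℝ), T (x' t) = A (x t))
    (hx0 : T (x 0) = B v) :
    ∀ t ≥ (0 : ℝ), ‖C (x t)‖ ≤ γ * ‖v‖ := by
  intro t ht
  set M : H →L[ℝ] H := adjoint T ∘L Q with hM
  set g : ℝ → ℝ := fun s => ⟪x s, M (x s)⟫ with hg
  have hMx : ∀ s : ℝ, HasDerivAt (fun s => M (x s)) (M (x' s)) s := fun s =>
    M.hasFDerivAt.comp_hasDerivAt s (hxderiv s)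
  have hgderiv : ∀ s : ℝ, HasDerivAt g (⟪x s, M (x' s)⟫ + ⟪x' s, M (x s)⟫) s := fun s =>
    (hxderiv s).inner ℝ (hMx s)
  -- derivative is ≤ 0 on s ≥ 0
  have hderiv_nonpos : ∀ s ≥ (0 : ℝ), ⟪x s, M (x' s)⟫ + ⟪x' s, M (x s)⟫ ≤ 0 := by
    intro s hs
    have h1 : ⟪x' s, M (x s)⟫ = ⟪x s, (adjoint A ∘L Q) (x s)⟫ := by
      calc ⟪x' s, M (x s)⟫ = ⟪T (x' s), Q (x s)⟫ := adjoint_inner_right T _ _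
        _ = ⟪A (x s), Q (x s)⟫ := by rw [hxdyn s hs]
        _ = ⟪Q (x s), A (x s)⟫ := real_inner_comm _ _
        _ = ⟪(adjoint A) (Q (x s)), x s⟫ := (adjoint_inner_left A (x s) (Q (x s))).symm
        _ = ⟪x s, (adjoint A ∘L Q) (x s)⟫ := by rw [real_inner_comm]; rfl
    have h2 : ⟪x s, M (x' s)⟫ = ⟪x s, (adjoint Q ∘L A) (x s)⟫ := by
      calc ⟪x s, M (x' s)⟫ = ⟪x s, ((adjoint Q) ∘L T) (x' s)⟫ := by rw [← hQT]
        _ = ⟪Q (x s), T (x' s)⟫ := adjoint_inner_right Q _ _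
        _ = ⟪Q (x s), A (x s)⟫ := by rw [hxdyn s hs]
        _ = ⟪x s, (adjoint Q ∘L A) (x s)⟫ := (adjoint_inner_right Q _ _).symm
    have hpos := ha.2 (x s)
    rw [reApplyInnerSelf_apply] at hpos
    have hre : ((0 : H →L[ℝ] H) - (adjoint A ∘L Q + adjoint Q ∘L A)) (x s)
        = -(((adjoint A ∘L Q) (x s)) + ((adjoint Q ∘L A) (x s))) := by
      simp
    rw [hre] at hpos
    simp only [inner_neg_left, inner_add_left, RCLike.re_to_real] at hpos
    have e1 := real_inner_comm ((adjoint A ∘L Q) (x s)) (x s)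
    have e2 := real_inner_comm ((adjoint Q ∘L A) (x s)) (x s)
    rw [h1, h2]
    linarith
  -- g is antitone on [0, ∞)
  have hanti : AntitoneOn g (Set.Ici (0 : ℝ)) := by
    apply antitoneOn_of_deriv_nonpos (convex_Ici 0)
    · exact fun s _ => ((hgderiv s).continuousAt).continuousWithinAt
    · exact fun s _ => ((hgderiv s).differentiableAt).differentiableWithinAt
    · intro s hs
      rw [interior_Ici] at hs
      rw [(hgderiv s).deriv]
      exact hderiv_nonpos s hs.le
  have hgt0 : g t ≤ g 0 := hanti Set.self_mem_Ici ht ht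
  -- g 0 ≤ ‖v‖²
  have hg0 : g 0 ≤ ‖v‖ ^ 2 := by
    have hkey : ⟪x 0, adjoint Q (B v)⟫ = g 0 := by
      rw [adjoint_inner_right, ← hx0, hg]
      simp only [hM, comp_apply, adjoint_inner_right]
      exact real_inner_comm _ _
    have := hc (x 0) (-v)
    simp only [map_neg, inner_neg_right, norm_neg] at this
    rw [hkey] at this
    have hgg : ⟪x 0, M (x 0)⟫ = g 0 := rfl
    rw [hgg] at this
    linarith
  -- ‖C (x t)‖² ≤ γ² g t
  have hQTMg : ⟪x t, (adjoint Q ∘L T) (x t)⟫ = g t := by rw [← hQT]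
  have hCb : ‖C (x t)‖ ^ 2 ≤ γ ^ 2 * g t := by
    have := hb (-(γ ^ 2)⁻¹ • C (x t)) (x t)
    rw [hQTMg] at this
    simp only [norm_smul, inner_smul_left, real_inner_self_eq_norm_sq,
      norm_neg, norm_inv, Real.norm_eq_abs, RCLike.conj_to_real] at this
    have hγ2 : (0 : ℝ) < γ ^ 2 := by positivity
    have habs : |γ ^ 2| = γ ^ 2 := abs_of_pos hγ2
    rw [mul_pow, habs] at this
    have h1 : γ ^ 2 * ((γ ^ 2)⁻¹ ^ 2 * ‖C (x t)‖ ^ 2) = (γ ^ 2)⁻¹ * ‖C (x t)‖ ^ 2 := by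
      field_simp
    rw [h1] at this
    have h2 : (γ ^ 2)⁻¹ * ‖C (x t)‖ ^ 2 ≤ g t := by linarith
    have h3 := mul_le_mul_of_nonneg_left h2 hγ2.le
    calc ‖C (x t)‖ ^ 2 = γ ^ 2 * ((γ ^ 2)⁻¹ * ‖C (x t)‖ ^ 2) := by field_simp
      _ ≤ γ ^ 2 * g t := h3
  have hfin : ‖C (x t)‖ ^ 2 ≤ (γ * ‖v‖) ^ 2 := by
    calc ‖C (x t)‖ ^ 2 ≤ γ ^ 2 * g t := hCb
    _ ≤ γ ^ 2 * ‖v‖ ^ 2 := by nlinarith [hg0, hgt0, sq_nonneg γ]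
    _ = (γ * ‖v‖) ^ 2 := by ring
  nlinarith [norm_nonneg (C (x t)), mul_nonneg hγ.le (norm_nonneg v)]
end

section
/- Let γ > 0 and let Q : H →L[ℝ] H satisfy T ∘ Q = Q* ∘ T* with T ∘ Q positive. Assume (a) A ∘ Q + Q* ∘ A* ⪯ 0; (b) for all u ∈ E and y ∈ H, γ²·‖u‖² + 2·⟪u, B* y⟫ + ⟪y, (Q* ∘ T*) y⟫ ≥ 0; (c) for all y ∈ H and u ∈ F, ⟪y, (T ∘ Q) y⟫ + 2·⟪y, Q* (C* u)⟫ + ‖u‖² ≥ 0. Then for every v̄ ∈ F and every strong dual trajectory x̄ with initial data v̄, one has ‖B* (x̄ t)‖ ≤ γ · ‖v̄‖ for all t ≥ 0. (Theorem 3(ii), stated for the dual auxiliary PIE: the dual non-coercive Lyapunov certificate bounds the peak dual output.) -/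
open ContinuousLinearMap
open scoped RealInnerProductSpace

/-- Theorem 3(ii), stated for the dual auxiliary PIE: the dual non-coercive Lyapunov
certificate bounds the peak dual output. -/
theorem stmt_5
    {H E F : Type*}
    [NormedAddCommGroup H] [InnerProductSpace ℝ H] [CompleteSpace H]
    [NormedAddCommGroup E] [InnerProductSpace ℝ E] [FiniteDimensional ℝ E]
    [NormedAddCommGroup F] [InnerProductSpace ℝ F] [FiniteDimensional ℝ F]
    (T A : H →L[ℝ] H) (B : E →L[ℝ] H) (C : H →L[ℝ] F)
    (γ : ℝ) (hγ : 0 < γ)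
    (Q : H →L[ℝ] H)
    (hQT : T ∘L Q = adjoint Q ∘L adjoint T)
    (hQTpos : (T ∘L Q).IsPositive)
    (ha : ((0 : H →L[ℝ] H) - (A ∘L Q + adjoint Q ∘L adjoint A)).IsPositive)
    (hb : ∀ (u : E) (y : H),
      γ ^ 2 * ‖u‖ ^ 2 + 2 * ⟪u, adjoint B y⟫ + ⟪y, (adjoint Q ∘L adjoint T) y⟫ ≥ 0)
    (hc : ∀ (y : H) (u : F),
      ⟪y, (T ∘L Q) y⟫ + 2 * ⟪y, adjoint Q (adjoint C u)⟫ + ‖u‖ ^ 2 ≥ 0)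
    (vb : F) (xb xb' : ℝ → H)
    (hxbderiv : ∀ t : ℝ, HasDerivAt xb (xb' t) t)
    (hxbdyn : ∀ t ≥ (0 : ℝ), adjoint T (xb' t) = adjoint A (xb t))
    (hxb0 : adjoint T (xb 0) = adjoint C vb) :
    ∀ t ≥ (0 : ℝ), ‖adjoint B (xb t)‖ ≤ γ * ‖vb‖ := by
  set V : ℝ → ℝ := fun t => ⟪xb t, (T ∘L Q) (xb t)⟫ with hVdef
  have hTQself : ∀ y : H, ⟪y, (T ∘L Q) y⟫ = ⟪y, adjoint Q (adjoint T y)⟫ := by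
    intro y; rw [hQT]; rfl
  have hderiv : ∀ t : ℝ, HasDerivAt V
      (⟪xb t, (T ∘L Q) (xb' t)⟫ + ⟪xb' t, (T ∘L Q) (xb t)⟫) t := by
    intro t
    exact (hxbderiv t).inner ℝ
      (((T ∘L Q).hasFDerivAt.comp_hasDerivAt t (hxbderiv t)))
  -- derivative is nonpositive for t ≥ 0
  have hdnonpos : ∀ t ≥ (0:ℝ),
      ⟪xb t, (T ∘L Q) (xb' t)⟫ + ⟪xb' t, (T ∘L Q) (xb t)⟫ ≤ 0 := by
    intro t ht
    have h1 : ⟪xb t, (T ∘L Q) (xb' t)⟫ = ⟪xb t, (adjoint Q ∘L adjoint A) (xb t)⟫ := by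
      rw [hQT]
      show ⟪xb t, adjoint Q (adjoint T (xb' t))⟫ = _
      rw [hxbdyn t ht]; rfl
    have h2 : ⟪xb' t, (T ∘L Q) (xb t)⟫ = ⟪xb t, (A ∘L Q) (xb t)⟫ := by
      show ⟪xb' t, T (Q (xb t))⟫ = ⟪xb t, A (Q (xb t))⟫
      rw [real_inner_comm, ← adjoint_inner_right T, hxbdyn t ht,
        adjoint_inner_right A, real_inner_comm]
    have := ha.inner_nonneg_right (xb t)
    simp only [RCLike.re_to_real, sub_apply, add_apply, zero_apply,
      inner_sub_right, inner_add_right, inner_zero_right] at this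
    rw [h1, h2]
    linarith
  -- V is antitone on [0, ∞)
  have hanti : AntitoneOn V (Set.Ici 0) := by
    apply antitoneOn_of_deriv_nonpos (convex_Ici 0)
    · exact fun t _ => ((hderiv t).continuousAt).continuousWithinAt
    · exact fun t _ => ((hderiv t).differentiableAt).differentiableWithinAt
    · intro t ht
      rw [interior_Ici] at ht
      rw [(hderiv t).deriv]
      exact hdnonpos t (le_of_lt ht)
  -- V 0 ≤ ‖vb‖ ^ 2
  have hV0 : V 0 ≤ ‖vb‖ ^ 2 := by
    have key : ⟪xb 0, adjoint Q (adjoint C vb)⟫ = V 0 := by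
      rw [← hxb0, ← hTQself]
    have := hc (-(xb 0)) vb
    simp only [inner_neg_left, inner_neg_right, map_neg, neg_neg] at this
    rw [key] at this
    change ⟪xb 0, (T ∘L Q) (xb 0)⟫ + 2 * -V 0 + ‖vb‖ ^ 2 ≥ 0 at this
    have hv : V 0 = ⟪xb 0, (T ∘L Q) (xb 0)⟫ := rfl
    linarith
  intro t ht
  have hVt : V t ≤ ‖vb‖ ^ 2 :=
    le_trans (hanti (Set.self_mem_Ici) ht ht) hV0
  -- output bound via hb with u = -(γ^2)⁻¹ • B* x
  have hbd := hb (-(γ ^ 2)⁻¹ • adjoint B (xb t)) (xb t)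
  have hγ2 : (0:ℝ) < γ ^ 2 := by positivity
  rw [norm_smul, inner_smul_left] at hbd
  simp only [RCLike.conj_to_real, norm_neg, norm_inv, norm_pow, Real.norm_eq_abs,
    abs_of_pos hγ, real_inner_self_eq_norm_sq] at hbd
  have hVt' : ⟪xb t, (adjoint Q ∘L adjoint T) (xb t)⟫ = V t := by
    rw [hVdef]; exact (hTQself (xb t)).symm
  rw [hVt'] at hbd
  have hb2 : ‖adjoint B (xb t)‖ ^ 2 ≤ γ ^ 2 * V t := by
    have e1 : γ ^ 2 * ((γ ^ 2)⁻¹ * ‖adjoint B (xb t)‖) ^ 2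
        = (γ ^ 2)⁻¹ * ‖adjoint B (xb t)‖ ^ 2 := by
      field_simp
    rw [e1] at hbd
    have h3 : (γ ^ 2)⁻¹ * ‖adjoint B (xb t)‖ ^ 2 ≤ V t := by linarith
    have h4 := mul_le_mul_of_nonneg_left h3 hγ2.le
    calc ‖adjoint B (xb t)‖ ^ 2
        = γ ^ 2 * ((γ ^ 2)⁻¹ * ‖adjoint B (xb t)‖ ^ 2) := by field_simp
      _ ≤ γ ^ 2 * V t := h4
  have hbound : ‖adjoint B (xb t)‖ ^ 2 ≤ (γ * ‖vb‖) ^ 2 := by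
    calc ‖adjoint B (xb t)‖ ^ 2 ≤ γ ^ 2 * V t := hb2
    _ ≤ γ ^ 2 * ‖vb‖ ^ 2 := by nlinarith
    _ = (γ * ‖vb‖) ^ 2 := by ring
  have h1 : (0:ℝ) ≤ γ * ‖vb‖ := by positivity
  nlinarith [norm_nonneg (adjoint B (xb t))]
end

section
/- Let Q : H →L[ℝ] H satisfy T* ∘ Q = Q* ∘ T, and let x : ℝ → H be a differentiable function with derivative x' such that T (x' t) = A (x t) for every t ≥ 0. Then for every t ≥ 0 the non-coercive storage function V(t) := ⟪T (x t), Q (x t)⟫ has derivative at t equal to ⟪x t, (A* ∘ Q + Q* ∘ A) (x t)⟫. (Lyapunov derivative formula used in the proof of Theorem 3.) -/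
/-!
Differentiate `V = ⟪T x, Q x⟫` by the product rule. Along the dynamics `T x' = A x`, the term
`⟪T x', Q x⟫` is `⟪x, A* Q x⟫` directly, while `⟪T x, Q x'⟫` only becomes `⟪x, Q* A x⟫` after
`T* Q = Q* T` moves `T` from `x` onto `x'`.
-/

open ContinuousLinearMap
open scoped RealInnerProductSpace

section

variable {H : Type*} [NormedAddCommGroup H] [InnerProductSpace ℝ H]

theorem HasDerivAt.inner_apply_apply (T Q : H →L[ℝ] H) {x : ℝ → H} {v : H} {t : ℝ}
    (hx : HasDerivAt x v t) :
    HasDerivAt (fun s => ⟪T (x s), Q (x s)⟫) (⟪T (x t), Q v⟫ + ⟪T v, Q (x t)⟫) t :=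
  (T.hasFDerivAt.comp_hasDerivAt t hx).inner ℝ (Q.hasFDerivAt.comp_hasDerivAt t hx)

theorem inner_apply_add_inner_apply_eq_of_adjoint_comp_eq [CompleteSpace H]
    {T A Q : H →L[ℝ] H} (hQT : adjoint T ∘L Q = adjoint Q ∘L T) {u v : H} (hTv : T v = A u) :
    ⟪T u, Q v⟫ + ⟪T v, Q u⟫ = ⟪u, (adjoint A ∘L Q + adjoint Q ∘L A) u⟫ := by
  have hQ : ⟪T u, Q v⟫ = ⟪u, adjoint Q (A u)⟫ :=
    calc ⟪T u, Q v⟫ = ⟪adjoint Q (T u), v⟫ := (adjoint_inner_left Q v (T u)).symm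
      _ = ⟪adjoint T (Q u), v⟫ := congrArg (⟪·, v⟫) (DFunLike.congr_fun hQT u).symm
      _ = ⟪Q u, T v⟫ := adjoint_inner_left T v (Q u)
      _ = ⟪u, adjoint Q (A u)⟫ := by rw [hTv, adjoint_inner_right]
  rw [hQ, hTv, ← adjoint_inner_right, add_apply, comp_apply, comp_apply, inner_add_right,
    add_comm]

end

/-- Lyapunov derivative formula used in the proof of Theorem 3. -/
theorem stmt_6
    {H : Type*}
    [NormedAddCommGroup H] [InnerProductSpace ℝ H] [CompleteSpace H]
    (T A : H →L[ℝ] H)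
    (Q : H →L[ℝ] H)
    (hQT : adjoint T ∘L Q = adjoint Q ∘L T)
    (x x' : ℝ → H)
    (hxderiv : ∀ t : ℝ, HasDerivAt x (x' t) t)
    (hxdyn : ∀ t ≥ (0 : ℝ), T (x' t) = A (x t)) :
    ∀ t ≥ (0 : ℝ),
      HasDerivAt (fun s => ⟪T (x s), Q (x s)⟫)
        (⟪x t, (adjoint A ∘L Q + adjoint Q ∘L A) (x t)⟫) t := by
  intro t ht
  rw [← inner_apply_add_inner_apply_eq_of_adjoint_comp_eq hQT (hxdyn t ht)]
  exact (hxderiv t).inner_apply_apply T Q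
end

section
/- Let x : ℝ → H be such that for every s ≥ 0 the map r ↦ T (x r) has derivative A (x s) at s, and let x̄ : ℝ → H be a differentiable function with derivative x̄' such that T* (x̄' s) = A* (x̄ s) for every s ≥ 0. Then for every t ≥ 0, ⟪T* (x̄ 0), x t⟫ = ⟪x̄ t, T (x 0)⟫. Equivalently, the function s ↦ ⟪x̄ (t − s), T (x s)⟫ is constant on [0, t]. (Integration-by-parts identity between primal and dual PIE solutions, the key step in the proof of Theorem 1.) -/
/-!
Differentiating `s ↦ ⟪x̄ (t - s), T (x s)⟫` gives `⟪x̄ (t - s), A (x s)⟫ - ⟪T* (x̄' (t - s)), x s⟫`,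
which vanishes by the dual dynamics `T* x̄' = A* x̄`. So the pairing is constant on `[0, t]`, and
comparing its values at `s = 0` and `s = t` gives the identity.
-/

open ContinuousLinearMap Set
open scoped RealInnerProductSpace

theorem constant_of_hasDerivAt_zero {E : Type*} [NormedAddCommGroup E] [NormedSpace ℝ E]
    {f : ℝ → E} {a b : ℝ} (hf : ∀ s ∈ Icc a b, HasDerivAt f 0 s) :
    ∀ s ∈ Icc a b, f s = f a :=
  constant_of_has_deriv_right_zero (fun s hs => (hf s hs).continuousAt.continuousWithinAt)
    fun s hs => (hf s (Ico_subset_Icc_self hs)).hasDerivWithinAt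

section

variable {H : Type*} [NormedAddCommGroup H] [InnerProductSpace ℝ H] [CompleteSpace H]
  (T A : H →L[ℝ] H)

theorem inner_apply_eq_of_adjoint_eq {u v : H} (h : adjoint T u = adjoint A v) (y : H) :
    ⟪u, T y⟫ = ⟪v, A y⟫ := by
  rw [← adjoint_inner_left, h, adjoint_inner_left]

variable {T A}

theorem hasDerivAt_inner_reflect_zero {x xb : ℝ → H} {xb' : H} {t s : ℝ}
    (hx : HasDerivAt (fun r => T (x r)) (A (x s)) s) (hxb : HasDerivAt xb xb' (t - s))
    (hdyn : adjoint T xb' = adjoint A (xb (t - s))) :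
    HasDerivAt (fun r => ⟪xb (t - r), T (x r)⟫) 0 s := by
  have h := (hxb.comp_const_sub t s).inner ℝ hx
  rwa [inner_neg_left, inner_apply_eq_of_adjoint_eq T A hdyn, add_neg_cancel] at h

end

/-- Integration-by-parts identity between primal and dual PIE solutions, the key
step in the proof of Theorem 1. -/
theorem stmt_7
    {H : Type*}
    [NormedAddCommGroup H] [InnerProductSpace ℝ H] [CompleteSpace H]
    (T A : H →L[ℝ] H)
    (x : ℝ → H)
    (hx : ∀ s ≥ (0 : ℝ), HasDerivAt (fun r => T (x r)) (A (x s)) s)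
    (xb xb' : ℝ → H)
    (hxbderiv : ∀ s : ℝ, HasDerivAt xb (xb' s) s)
    (hxbdyn : ∀ s ≥ (0 : ℝ), adjoint T (xb' s) = adjoint A (xb s)) :
    ∀ t ≥ (0 : ℝ),
      (⟪adjoint T (xb 0), x t⟫ = ⟪xb t, T (x 0)⟫) ∧
      (∀ s₁ ∈ Set.Icc (0 : ℝ) t, ∀ s₂ ∈ Set.Icc (0 : ℝ) t,
        ⟪xb (t - s₁), T (x s₁)⟫ = ⟪xb (t - s₂), T (x s₂)⟫) := by
  intro t ht
  have hconst : ∀ s ∈ Icc 0 t, ⟪xb (t - s), T (x s)⟫ = ⟪xb (t - 0), T (x 0)⟫ :=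
    constant_of_hasDerivAt_zero fun s hs =>
      hasDerivAt_inner_reflect_zero (hx s hs.1) (hxbderiv _) (hxbdyn _ (sub_nonneg.2 hs.2))
  refine ⟨?_, fun s₁ hs₁ s₂ hs₂ => (hconst s₁ hs₁).trans (hconst s₂ hs₂).symm⟩
  rw [adjoint_inner_left]
  simpa only [sub_self, sub_zero] using hconst t ⟨ht, le_rfl⟩
end

section
/- Let v ∈ E, v̄ ∈ F, let x be a primal trajectory with initial data v, and let x̄ be a dual trajectory with initial data v̄. Then for every t ≥ 0, ⟪v̄, C (x t)⟫ = ⟪B* (x̄ t), v⟫; i.e., the pairing of the dual input with the primal output equals the pairing of the dual output with the primal input at every time. (Output pairing identity from the proof of Theorem 1.) -/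
/-!
For fixed `t ≥ 0` the pairing `s ↦ ⟪x̄ (t - s), T (x s)⟫` is constant on `[0, t]`: its derivative
`-⟪T* (x̄' (t - s)), x s⟫ + ⟪A* (x̄ (t - s)), x s⟫` vanishes by the dual dynamics. Comparing the
values at `s = t` and `s = 0` and inserting the initial conditions `T* (x̄ 0) = C* v̄` and
`T (x 0) = B v` gives the identity.
-/

open ContinuousLinearMap
open scoped RealInnerProductSpace

section DualPairing

variable {H : Type*} [NormedAddCommGroup H] [InnerProductSpace ℝ H] [CompleteSpace H]
  {T A : H →L[ℝ] H} {x xb xb' : ℝ → H}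

theorem hasDerivAt_inner_dual_reverse_primal
    (hx : ∀ s ≥ (0 : ℝ), HasDerivAt (fun u => T (x u)) (A (x s)) s)
    (hxbderiv : ∀ s : ℝ, HasDerivAt xb (xb' s) s)
    (hxbdyn : ∀ s ≥ (0 : ℝ), adjoint T (xb' s) = adjoint A (xb s))
    {s t : ℝ} (hs : 0 ≤ s) (hst : s ≤ t) :
    HasDerivAt (fun u => ⟪xb (t - u), T (x u)⟫) 0 s := by
  refine (((hxbderiv (t - s)).comp_const_sub t s).inner ℝ (hx s hs)).congr_deriv ?_
  rw [inner_neg_left, ← adjoint_inner_left A, ← adjoint_inner_left T,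
    hxbdyn (t - s) (sub_nonneg.mpr hst), add_neg_cancel]

theorem inner_dual_primal_swap
    (hx : ∀ s ≥ (0 : ℝ), HasDerivAt (fun u => T (x u)) (A (x s)) s)
    (hxbderiv : ∀ s : ℝ, HasDerivAt xb (xb' s) s)
    (hxbdyn : ∀ s ≥ (0 : ℝ), adjoint T (xb' s) = adjoint A (xb s))
    {t : ℝ} (ht : 0 ≤ t) :
    ⟪xb 0, T (x t)⟫ = ⟪xb t, T (x 0)⟫ := by
  have hderiv : ∀ s ∈ Set.Icc 0 t, HasDerivAt (fun u => ⟪xb (t - u), T (x u)⟫) 0 s :=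
    fun s hs => hasDerivAt_inner_dual_reverse_primal hx hxbderiv hxbdyn hs.1 hs.2
  have hconst := constant_of_has_deriv_right_zero
    (fun s hs => (hderiv s hs).continuousAt.continuousWithinAt)
    (fun s hs => (hderiv s (Set.Ico_subset_Icc_self hs)).hasDerivWithinAt)
    t (Set.right_mem_Icc.mpr ht)
  simpa using hconst

end DualPairing

/-- Output pairing identity from the proof of Theorem 1. -/
theorem stmt_8
    {H E F : Type*}
    [NormedAddCommGroup H] [InnerProductSpace ℝ H] [CompleteSpace H]
    [NormedAddCommGroup E] [InnerProductSpace ℝ E] [FiniteDimensional ℝ E]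
    [NormedAddCommGroup F] [InnerProductSpace ℝ F] [FiniteDimensional ℝ F]
    (T A : H →L[ℝ] H) (B : E →L[ℝ] H) (C : H →L[ℝ] F)
    (v : E) (vb : F)
    (x : ℝ → H)
    (hx : ∀ t ≥ (0 : ℝ), HasDerivAt (fun s => T (x s)) (A (x t)) t)
    (hx0 : T (x 0) = B v)
    (xb xb' : ℝ → H)
    (hxbderiv : ∀ t : ℝ, HasDerivAt xb (xb' t) t)
    (hxbdyn : ∀ t ≥ (0 : ℝ), adjoint T (xb' t) = adjoint A (xb t))
    (hxb0 : adjoint T (xb 0) = adjoint C vb) :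
    ∀ t ≥ (0 : ℝ), ⟪vb, C (x t)⟫ = ⟪adjoint B (xb t), v⟫ := by
  intro t ht
  calc ⟪vb, C (x t)⟫ = ⟪adjoint T (xb 0), x t⟫ := by rw [hxb0, adjoint_inner_left]
    _ = ⟪xb t, T (x 0)⟫ := by
      rw [adjoint_inner_left, inner_dual_primal_swap hx hxbderiv hxbdyn ht]
    _ = ⟪adjoint B (xb t), v⟫ := by rw [hx0, adjoint_inner_left]
end

section
/- Assume E and F are nontrivial. Suppose X : E → ℝ → H assigns to each v ∈ E a primal trajectory X v with initial data v, and X̄ : F → ℝ → H assigns to each v̄ ∈ F a dual trajectory X̄ v̄ with initial data v̄. Then for every fixed t ≥ 0, the supremum over unit vectors v ∈ E of ‖C (X v t)‖ equals the supremum over unit vectors v̄ ∈ F of ‖B* (X̄ v̄ t)‖ (suprema taken in the extended nonnegative reals). (Pointwise-in-time equality of primal and dual peak responses, intermediate step of Theorem 1.) -/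
/-!
Along a primal trajectory `x` and a dual trajectory `x̄` run backwards from time `t`, the
pairing `s ↦ ⟪x̄ (t - s), T (x s)⟫` has derivative `⟪x̄, A x⟫ - ⟪x̄', T x⟫ = ⟪A* x̄ - T* x̄', x⟫ = 0`
on `[0, t]`. Comparing its values at `s = t` and `s = 0` and inserting the initial data gives
`⟪v̄, C (X v t)⟫ = ⟪B* (X̄ v̄ t), v⟫` for all `v`, `v̄`. Two maps related by such an adjoint
identity have the same supremum of norms over unit vectors: test against the normalized image.
-/

open ContinuousLinearMap Set
open scoped RealInnerProductSpace ENNReal NNReal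

section UnitSphereSupremum

variable {E F : Type*} [NormedAddCommGroup E] [InnerProductSpace ℝ E]
  [NormedAddCommGroup F] [InnerProductSpace ℝ F]

theorem exists_norm_eq_one_inner_eq_norm {y : F} (hy : y ≠ 0) :
    ∃ w : F, ‖w‖ = 1 ∧ ⟪w, y⟫ = ‖y‖ := by
  refine ⟨‖y‖⁻¹ • y, norm_smul_inv_norm hy, ?_⟩
  rw [real_inner_smul_left, real_inner_self_eq_norm_sq]
  field_simp [norm_ne_zero_iff.2 hy]

theorem iSup_norm_le_of_inner_eq (P : E → F) (Q : F → E)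
    (hPQ : ∀ v w, ⟪w, P v⟫ = ⟪Q w, v⟫) :
    (⨆ v ∈ {v : E | ‖v‖ = 1}, (‖P v‖₊ : ℝ≥0∞)) ≤
      ⨆ w ∈ {w : F | ‖w‖ = 1}, (‖Q w‖₊ : ℝ≥0∞) := by
  refine iSup₂_le fun v (hv : ‖v‖ = 1) => ?_
  rcases eq_or_ne (P v) 0 with hPv | hPv
  · simp [hPv]
  obtain ⟨w, hw, hwPv⟩ := exists_norm_eq_one_inner_eq_norm hPv
  have hle : ‖P v‖ ≤ ‖Q w‖ :=
    calc ‖P v‖ = ⟪Q w, v⟫ := by rw [← hPQ, hwPv]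
      _ ≤ ‖Q w‖ * ‖v‖ := real_inner_le_norm _ _
      _ = ‖Q w‖ := by rw [hv, mul_one]
  exact le_iSup₂_of_le (f := fun w _ => (‖Q w‖₊ : ℝ≥0∞)) w hw (by exact_mod_cast hle)

theorem iSup_norm_eq_of_inner_eq (P : E → F) (Q : F → E)
    (hPQ : ∀ v w, ⟪w, P v⟫ = ⟪Q w, v⟫) :
    (⨆ v ∈ {v : E | ‖v‖ = 1}, (‖P v‖₊ : ℝ≥0∞)) =
      ⨆ w ∈ {w : F | ‖w‖ = 1}, (‖Q w‖₊ : ℝ≥0∞) :=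
  le_antisymm (iSup_norm_le_of_inner_eq P Q hPQ) <|
    iSup_norm_le_of_inner_eq Q P fun w v => by
      rw [real_inner_comm, ← hPQ, real_inner_comm]

end UnitSphereSupremum

section PrimalDualPairing

variable {H : Type*} [NormedAddCommGroup H] [InnerProductSpace ℝ H] [CompleteSpace H]
  {T A : H →L[ℝ] H} {x xb xb' : ℝ → H}

theorem hasDerivAt_inner_dual_primal_zero
    (hx : ∀ s ≥ (0 : ℝ), HasDerivAt (fun s => T (x s)) (A (x s)) s)
    (hxb : ∀ s, HasDerivAt xb (xb' s) s)
    (hdyn : ∀ s ≥ (0 : ℝ), adjoint T (xb' s) = adjoint A (xb s))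
    {s t : ℝ} (hs : 0 ≤ s) (hst : s ≤ t) :
    HasDerivAt (fun s => ⟪xb (t - s), T (x s)⟫) 0 s := by
  have hpair := ((hxb (t - s)).comp_const_sub t s).inner ℝ (hx s hs)
  have hcancel : ⟪xb (t - s), A (x s)⟫ + ⟪-xb' (t - s), T (x s)⟫ = 0 := by
    rw [inner_neg_left, ← adjoint_inner_left A, ← hdyn (t - s) (sub_nonneg.2 hst),
      adjoint_inner_left, add_neg_cancel]
  rwa [hcancel] at hpair

theorem inner_dual_primal_eq
    (hx : ∀ s ≥ (0 : ℝ), HasDerivAt (fun s => T (x s)) (A (x s)) s)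
    (hxb : ∀ s, HasDerivAt xb (xb' s) s)
    (hdyn : ∀ s ≥ (0 : ℝ), adjoint T (xb' s) = adjoint A (xb s))
    {t : ℝ} (ht : 0 ≤ t) :
    ⟪xb 0, T (x t)⟫ = ⟪xb t, T (x 0)⟫ := by
  have hderiv : ∀ s ∈ Icc 0 t, HasDerivAt (fun s => ⟪xb (t - s), T (x s)⟫) 0 s :=
    fun s hs => hasDerivAt_inner_dual_primal_zero hx hxb hdyn hs.1 hs.2
  have hconst := constant_of_has_deriv_right_zero
    (fun s hs => (hderiv s hs).continuousAt.continuousWithinAt)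
    (fun s hs => (hderiv s (Ico_subset_Icc_self hs)).hasDerivWithinAt) t ⟨ht, le_rfl⟩
  simpa only [sub_self, sub_zero] using hconst

end PrimalDualPairing

theorem stmt_9_general
    {H E F : Type*}
    [NormedAddCommGroup H] [InnerProductSpace ℝ H] [CompleteSpace H]
    [NormedAddCommGroup E] [InnerProductSpace ℝ E] [FiniteDimensional ℝ E]
    [NormedAddCommGroup F] [InnerProductSpace ℝ F] [FiniteDimensional ℝ F]
    (T A : H →L[ℝ] H) (B : E →L[ℝ] H) (C : H →L[ℝ] F)
    (X : E → ℝ → H)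
    (hX : ∀ v : E, ∀ t ≥ (0 : ℝ), HasDerivAt (fun s => T (X v s)) (A (X v t)) t)
    (hX0 : ∀ v : E, T (X v 0) = B v)
    (Xb : F → ℝ → H) (Xb' : F → ℝ → H)
    (hXbderiv : ∀ (vb : F) (t : ℝ), HasDerivAt (Xb vb) (Xb' vb t) t)
    (hXbdyn : ∀ vb : F, ∀ t ≥ (0 : ℝ), adjoint T (Xb' vb t) = adjoint A (Xb vb t))
    (hXb0 : ∀ vb : F, adjoint T (Xb vb 0) = adjoint C vb) :
    ∀ t ≥ (0 : ℝ),
      (⨆ v ∈ {v : E | ‖v‖ = 1}, (‖C (X v t)‖₊ : ℝ≥0∞)) =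
        ⨆ vb ∈ {vb : F | ‖vb‖ = 1}, (‖adjoint B (Xb vb t)‖₊ : ℝ≥0∞) := by
  intro t ht
  refine iSup_norm_eq_of_inner_eq _ _ fun v vb => ?_
  calc ⟪vb, C (X v t)⟫ = ⟪Xb vb 0, T (X v t)⟫ := by
        rw [← adjoint_inner_left C, ← hXb0, adjoint_inner_left]
    _ = ⟪Xb vb t, T (X v 0)⟫ := inner_dual_primal_eq (hX v) (hXbderiv vb) (hXbdyn vb) ht
    _ = ⟪adjoint B (Xb vb t), v⟫ := by rw [hX0, adjoint_inner_left]

/-- Pointwise-in-time equality of primal and dual peak responses, an intermediate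
step of Theorem 1. -/
theorem stmt_9
    {H E F : Type*}
    [NormedAddCommGroup H] [InnerProductSpace ℝ H] [CompleteSpace H]
    [NormedAddCommGroup E] [InnerProductSpace ℝ E] [FiniteDimensional ℝ E]
    [NormedAddCommGroup F] [InnerProductSpace ℝ F] [FiniteDimensional ℝ F]
    [Nontrivial E] [Nontrivial F]
    (T A : H →L[ℝ] H) (B : E →L[ℝ] H) (C : H →L[ℝ] F)
    (X : E → ℝ → H)
    (hX : ∀ v : E, ∀ t ≥ (0 : ℝ), HasDerivAt (fun s => T (X v s)) (A (X v t)) t)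
    (hX0 : ∀ v : E, T (X v 0) = B v)
    (Xb : F → ℝ → H) (Xb' : F → ℝ → H)
    (hXbderiv : ∀ (vb : F) (t : ℝ), HasDerivAt (Xb vb) (Xb' vb t) t)
    (hXbdyn : ∀ vb : F, ∀ t ≥ (0 : ℝ), adjoint T (Xb' vb t) = adjoint A (Xb vb t))
    (hXb0 : ∀ vb : F, adjoint T (Xb vb 0) = adjoint C vb) :
    ∀ t ≥ (0 : ℝ),
      (⨆ v ∈ {v : E | ‖v‖ = 1}, (‖C (X v t)‖₊ : ℝ≥0∞)) =
        ⨆ vb ∈ {vb : F | ‖vb‖ = 1}, (‖adjoint B (Xb vb t)‖₊ : ℝ≥0∞) :=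
  stmt_9_general T A B C X hX hX0 Xb Xb' hXbderiv hXbdyn hXb0
end

section
/- Assume E and F are nontrivial. Suppose X : E → ℝ → H assigns to each v ∈ E a primal trajectory X v with initial data v, and X̄ : F → ℝ → H assigns to each v̄ ∈ F a dual trajectory X̄ v̄ with initial data v̄. Then the impulse-to-peak norms of the primal and dual systems coincide: ⨆ over unit v ∈ E, ⨆ over t ≥ 0 of ‖C (X v t)‖ equals ⨆ over unit v̄ ∈ F, ⨆ over t ≥ 0 of ‖B* (X̄ v̄ t)‖ (suprema taken in the extended nonnegative reals). (Theorem 1: equality of the impulse-to-peak norm of a well-posed PIE and its dual.) -/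
open ContinuousLinearMap
open scoped RealInnerProductSpace ENNReal NNReal

lemma sup_inner_unit {G : Type*} [NormedAddCommGroup G] [InnerProductSpace ℝ G] (w : G) :
    (⨆ u ∈ {u : G | ‖u‖ = 1}, (‖(⟪w, u⟫)‖₊ : ℝ≥0∞)) = (‖w‖₊ : ℝ≥0∞) := by
  apply le_antisymm
  · refine iSup₂_le fun u hu => ?_
    have hu' : ‖u‖ = 1 := hu
    have : ‖(⟪w, u⟫)‖ ≤ ‖w‖ := by
      calc ‖(⟪w, u⟫)‖ = |⟪w, u⟫| := rfl
        _ ≤ ‖w‖ * ‖u‖ := abs_real_inner_le_norm w u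
        _ = ‖w‖ := by rw [hu', mul_one]
    exact_mod_cast this
  · rcases eq_or_ne w 0 with rfl | hw
    · simp
    · have hn : ‖w‖ ≠ 0 := norm_ne_zero_iff.mpr hw
      have hu : (‖w‖⁻¹ • w) ∈ {u : G | ‖u‖ = 1} := by
        simp only [Set.mem_setOf_eq, norm_smul, norm_inv, norm_norm]
        exact inv_mul_cancel₀ hn
      refine le_trans ?_
        (le_iSup₂ (f := fun u (_ : u ∈ {u : G | ‖u‖ = 1}) => (‖(⟪w, u⟫)‖₊ : ℝ≥0∞))
          (‖w‖⁻¹ • w) hu)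
      have hv : ⟪w, ‖w‖⁻¹ • w⟫ = ‖w‖ := by
        rw [real_inner_smul_right, real_inner_self_eq_norm_sq]
        field_simp
      rw [hv]
      simp

/-- Theorem 1: equality of the impulse-to-peak norm of a well-posed PIE and its dual. -/
theorem stmt_10
    {H E F : Type*}
    [NormedAddCommGroup H] [InnerProductSpace ℝ H] [CompleteSpace H]
    [NormedAddCommGroup E] [InnerProductSpace ℝ E] [FiniteDimensional ℝ E]
    [NormedAddCommGroup F] [InnerProductSpace ℝ F] [FiniteDimensional ℝ F]
    [Nontrivial E] [Nontrivial F]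
    (T A : H →L[ℝ] H) (B : E →L[ℝ] H) (C : H →L[ℝ] F)
    (X : E → ℝ → H)
    (hX : ∀ v : E, ∀ t ≥ (0 : ℝ), HasDerivAt (fun s => T (X v s)) (A (X v t)) t)
    (hX0 : ∀ v : E, T (X v 0) = B v)
    (Xb : F → ℝ → H) (Xb' : F → ℝ → H)
    (hXbderiv : ∀ (vb : F) (t : ℝ), HasDerivAt (Xb vb) (Xb' vb t) t)
    (hXbdyn : ∀ vb : F, ∀ t ≥ (0 : ℝ), adjoint T (Xb' vb t) = adjoint A (Xb vb t))
    (hXb0 : ∀ vb : F, adjoint T (Xb vb 0) = adjoint C vb) :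
    (⨆ v ∈ {v : E | ‖v‖ = 1}, ⨆ t ∈ Set.Ici (0 : ℝ), (‖C (X v t)‖₊ : ℝ≥0∞)) =
      ⨆ vb ∈ {vb : F | ‖vb‖ = 1}, ⨆ t ∈ Set.Ici (0 : ℝ),
        (‖adjoint B (Xb vb t)‖₊ : ℝ≥0∞) := by
  -- key duality identity
  have key : ∀ (v : E) (vb : F), ∀ t ≥ (0 : ℝ),
      ⟪C (X v t), vb⟫ = ⟪adjoint B (Xb vb t), v⟫ := by
    intro v vb t ht
    set g : ℝ → ℝ := fun s => ⟪T (X v s), Xb vb (t - s)⟫ with hg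
    have hds : ∀ s ∈ Set.Icc (0:ℝ) t, HasDerivAt g 0 s := by
      intro s hs
      have h1 := hX v s hs.1
      have hsub : HasDerivAt (fun s : ℝ => t - s) (-1) s := by
        simpa using ((hasDerivAt_id s).const_sub t)
      have h2 : HasDerivAt (fun s : ℝ => Xb vb (t - s)) ((-1 : ℝ) • Xb' vb (t - s)) s :=
        HasDerivAt.scomp s (hXbderiv vb (t - s)) hsub
      have h3 := (HasDerivAt.inner ℝ h1 h2)
      have hz : ⟪T (X v s), (-1 : ℝ) • Xb' vb (t - s)⟫ + ⟪A (X v s), Xb vb (t - s)⟫ = 0 := by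
        have hts : t - s ≥ 0 := by linarith [hs.2]
        have e1 : ⟪T (X v s), Xb' vb (t - s)⟫ = ⟪A (X v s), Xb vb (t - s)⟫ := by
          calc ⟪T (X v s), Xb' vb (t - s)⟫
              = ⟪X v s, adjoint T (Xb' vb (t - s))⟫ := (adjoint_inner_right T _ _).symm
            _ = ⟪X v s, adjoint A (Xb vb (t - s))⟫ := by rw [hXbdyn vb _ hts]
            _ = ⟪A (X v s), Xb vb (t - s)⟫ := adjoint_inner_right A _ _
        rw [real_inner_smul_right, e1]
        ring
      rw [hz] at h3
      exact h3
    have hcont : ContinuousOn g (Set.Icc 0 t) := fun s hs =>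
      ((hds s hs).continuousAt.continuousWithinAt)
    have hconst := constant_of_has_deriv_right_zero hcont
      (fun s hs => ((hds s (Set.mem_Icc_of_Ico hs)).hasDerivWithinAt)) t
      (Set.right_mem_Icc.mpr ht)
    -- g t = g 0
    have gt_eq : g t = ⟪C (X v t), vb⟫ := by
      simp only [hg, sub_self]
      calc ⟪T (X v t), Xb vb 0⟫ = ⟪Xb vb 0, T (X v t)⟫ := real_inner_comm _ _
        _ = ⟪adjoint T (Xb vb 0), X v t⟫ := (adjoint_inner_left T _ _).symm
        _ = ⟪adjoint C vb, X v t⟫ := by rw [hXb0 vb]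
        _ = ⟪vb, C (X v t)⟫ := adjoint_inner_left C _ _
        _ = ⟪C (X v t), vb⟫ := real_inner_comm _ _
    have g0_eq : g 0 = ⟪adjoint B (Xb vb t), v⟫ := by
      simp only [hg, sub_zero]
      calc ⟪T (X v 0), Xb vb t⟫ = ⟪B v, Xb vb t⟫ := by rw [hX0 v]
        _ = ⟪Xb vb t, B v⟫ := real_inner_comm _ _
        _ = ⟪adjoint B (Xb vb t), v⟫ := (adjoint_inner_left B _ _).symm
    rw [← gt_eq, ← g0_eq]
    exact hconst
  apply le_antisymm
  · refine iSup₂_le fun v hv => iSup₂_le fun t ht => ?_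
    rw [← sup_inner_unit (C (X v t))]
    refine iSup₂_le fun vb hvb => ?_
    rw [key v vb t ht]
    have hb : (‖(⟪adjoint B (Xb vb t), v⟫)‖₊ : ℝ≥0∞) ≤ (‖adjoint B (Xb vb t)‖₊ : ℝ≥0∞) := by
      have hv' : ‖v‖ = 1 := hv
      have : ‖(⟪adjoint B (Xb vb t), v⟫)‖ ≤ ‖adjoint B (Xb vb t)‖ := by
        calc ‖(⟪adjoint B (Xb vb t), v⟫)‖ = |⟪adjoint B (Xb vb t), v⟫| := rfl
          _ ≤ ‖adjoint B (Xb vb t)‖ * ‖v‖ := abs_real_inner_le_norm _ _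
          _ = ‖adjoint B (Xb vb t)‖ := by rw [hv', mul_one]
      exact_mod_cast this
    exact le_iSup₂_of_le vb hvb (le_iSup₂_of_le t ht hb)
  · refine iSup₂_le fun vb hvb => iSup₂_le fun t ht => ?_
    rw [← sup_inner_unit (adjoint B (Xb vb t))]
    refine iSup₂_le fun v hv => ?_
    rw [show ⟪adjoint B (Xb vb t), v⟫ = ⟪C (X v t), vb⟫ from (key v vb t ht).symm]
    have hb : (‖(⟪C (X v t), vb⟫)‖₊ : ℝ≥0∞) ≤ (‖C (X v t)‖₊ : ℝ≥0∞) := by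
      have hvb' : ‖vb‖ = 1 := hvb
      have : ‖(⟪C (X v t), vb⟫)‖ ≤ ‖C (X v t)‖ := by
        calc ‖(⟪C (X v t), vb⟫)‖ = |⟪C (X v t), vb⟫| := rfl
          _ ≤ ‖C (X v t)‖ * ‖vb‖ := abs_real_inner_le_norm _ _
          _ = ‖C (X v t)‖ := by rw [hvb', mul_one]
      exact_mod_cast this
    exact le_iSup₂_of_le v hv (le_iSup₂_of_le t ht hb)
end

section
/- Let γ > 0 and let Q : H →L[ℝ] H be a positive operator with (a) C ∘ Q ∘ C* ⪯ id_F, (b) A ∘ Q ∘ T* + T ∘ Q ∘ A* ⪯ 0, and (c) B ∘ B* ⪯ γ² • (T ∘ Q ∘ T*). Assume that for every v̄ ∈ F there exists a dual trajectory with initial data v̄. Then for every v ∈ E and every primal trajectory x with initial data v, one has ‖C (x t)‖ ≤ γ · ‖v‖ for all t ≥ 0. (Theorem 2(ii) in full: the dual coercive Lyapunov certificate, together with well-posedness of the dual, bounds the impulse-to-peak norm of the primal PIE.) -/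
open ContinuousLinearMap
open scoped RealInnerProductSpace

set_option maxHeartbeats 1000000 in
/-- Theorem 2(ii) in full: the dual coercive Lyapunov certificate, together with
well-posedness of the dual, bounds the impulse-to-peak norm of the primal PIE. -/
theorem stmt_11
    {H E F : Type*}
    [NormedAddCommGroup H] [InnerProductSpace ℝ H] [CompleteSpace H]
    [NormedAddCommGroup E] [InnerProductSpace ℝ E] [FiniteDimensional ℝ E]
    [NormedAddCommGroup F] [InnerProductSpace ℝ F] [FiniteDimensional ℝ F]
    (T A : H →L[ℝ] H) (B : E →L[ℝ] H) (C : H →L[ℝ] F)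
    (γ : ℝ) (hγ : 0 < γ)
    (Q : H →L[ℝ] H) (hQpos : Q.IsPositive)
    (ha : (ContinuousLinearMap.id ℝ F - C ∘L Q ∘L adjoint C).IsPositive)
    (hb : ((0 : H →L[ℝ] H) - (A ∘L Q ∘L adjoint T + T ∘L Q ∘L adjoint A)).IsPositive)
    (hc : ((γ ^ 2) • (T ∘L Q ∘L adjoint T) - B ∘L adjoint B).IsPositive)
    (hwp : ∀ vb : F, ∃ xb xb' : ℝ → H,
      (∀ t : ℝ, HasDerivAt xb (xb' t) t) ∧
      (∀ t ≥ (0 : ℝ), adjoint T (xb' t) = adjoint A (xb t)) ∧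
      adjoint T (xb 0) = adjoint C vb)
    (v : E) (x : ℝ → H)
    (hx : ∀ t ≥ (0 : ℝ), HasDerivAt (fun s => T (x s)) (A (x t)) t)
    (hx0 : T (x 0) = B v) :
    ∀ t ≥ (0 : ℝ), ‖C (x t)‖ ≤ γ * ‖v‖ := by
  intro t ht
  obtain ⟨xb, xb', hdiff, hdual, hdual0⟩ := hwp (C (x t))
  -- Step 1: the pairing s ↦ ⟪T (x s), xb (t - s)⟫ is constant on [0, t]
  have hpair : ⟪T (x t), xb 0⟫ = ⟪T (x 0), xb t⟫ := by
    have hderiv : ∀ s ∈ Set.Icc (0:ℝ) t,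
        HasDerivAt (fun s => ⟪T (x s), xb (t - s)⟫) 0 s := by
      intro s hs
      have h1 : HasDerivAt (fun s => T (x s)) (A (x s)) s := hx s hs.1
      have hts : HasDerivAt (fun s : ℝ => t - s) (-1) s :=
        (hasDerivAt_id s).const_sub t
      have h2 : HasDerivAt (fun s => xb (t - s)) ((-1 : ℝ) • xb' (t - s)) s :=
        (hdiff (t - s)).scomp s hts
      have h3 := h1.inner ℝ h2
      have hts0 : (0:ℝ) ≤ t - s := by linarith [hs.2]
      have hzero : ⟪T (x s), (-1 : ℝ) • xb' (t - s)⟫ + ⟪A (x s), xb (t - s)⟫ = 0 := by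
        have e1 : ⟪A (x s), xb (t - s)⟫ = ⟪x s, adjoint A (xb (t - s))⟫ :=
          (adjoint_inner_right A (x s) (xb (t - s))).symm
        have e2 : ⟪T (x s), xb' (t - s)⟫ = ⟪x s, adjoint T (xb' (t - s))⟫ :=
          (adjoint_inner_right T (x s) (xb' (t - s))).symm
        rw [inner_smul_right, e1, e2, ← hdual (t - s) hts0]
        ring
      exact hzero ▸ h3
    have hcont : ContinuousOn (fun s => ⟪T (x s), xb (t - s)⟫) (Set.Icc 0 t) :=
      fun s hs => ((hderiv s hs).continuousAt).continuousWithinAt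
    have := constant_of_has_deriv_right_zero hcont
      (fun s hs => ((hderiv s (Set.mem_Icc_of_Ico hs)).hasDerivWithinAt)) t
      (Set.right_mem_Icc.mpr ht)
    simpa using this
  -- Step 2: the Lyapunov function V is antitone on [0, t]
  set V : ℝ → ℝ := fun τ => ⟪adjoint T (xb τ), Q (adjoint T (xb τ))⟫ with hV
  have hVderiv : ∀ τ : ℝ, HasDerivAt V
      (⟪adjoint T (xb τ), Q (adjoint T (xb' τ))⟫ +
        ⟪adjoint T (xb' τ), Q (adjoint T (xb τ))⟫) τ := by
    intro τ
    have h1 : HasDerivAt (fun τ => adjoint T (xb τ)) (adjoint T (xb' τ)) τ :=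
      ((adjoint T).hasFDerivAt.comp_hasDerivAt τ (hdiff τ))
    have h2 : HasDerivAt (fun τ => Q (adjoint T (xb τ))) (Q (adjoint T (xb' τ))) τ :=
      ((Q ∘L adjoint T).hasFDerivAt.comp_hasDerivAt τ (hdiff τ))
    exact h1.inner ℝ h2
  have hVanti : AntitoneOn V (Set.Icc 0 t) := by
    apply antitoneOn_of_deriv_nonpos (convex_Icc 0 t)
    · exact fun s _ => (hVderiv s).continuousAt.continuousWithinAt
    · exact fun s _ => ((hVderiv s).differentiableAt).differentiableWithinAt
    · intro s hs
      rw [interior_Icc] at hs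
      rw [(hVderiv s).deriv]
      have hs0 : (0:ℝ) ≤ s := le_of_lt hs.1
      have hd := hdual s hs0
      have key : ⟪adjoint T (xb s), Q (adjoint T (xb' s))⟫ +
          ⟪adjoint T (xb' s), Q (adjoint T (xb s))⟫ =
          ⟪xb s, (A ∘L Q ∘L adjoint T + T ∘L Q ∘L adjoint A) (xb s)⟫ := by
        rw [hd]
        simp only [ContinuousLinearMap.add_apply, ContinuousLinearMap.comp_apply,
          inner_add_right]
        rw [← adjoint_inner_left A (Q (adjoint T (xb s))) (xb s),
          ← adjoint_inner_left T (Q (adjoint A (xb s))) (xb s)]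
        ring
      have hpos := hb.inner_nonneg_right (xb s)
      simp only [ContinuousLinearMap.sub_apply, ContinuousLinearMap.zero_apply,
        zero_sub, ContinuousLinearMap.neg_apply, inner_neg_right,
        RCLike.re_to_real] at hpos
      rw [key]; linarith
  have hVle : V t ≤ V 0 := hVanti (Set.left_mem_Icc.mpr ht) (Set.right_mem_Icc.mpr ht) ht
  -- Step 3: bound V 0 by ‖C (x t)‖²
  have hV0 : V 0 ≤ ‖C (x t)‖ ^ 2 := by
    have hpos := ha.inner_nonneg_right (C (x t))
    simp only [ContinuousLinearMap.sub_apply, ContinuousLinearMap.id_apply,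
      ContinuousLinearMap.comp_apply, inner_sub_right, RCLike.re_to_real] at hpos
    have e : V 0 = ⟪C (x t), C (Q (adjoint C (C (x t))))⟫ := by
      rw [hV]
      simp only [hdual0]
      exact adjoint_inner_left C (Q (adjoint C (C (x t)))) (C (x t))
    rw [e, ← real_inner_self_eq_norm_sq (C (x t))]
    linarith
  -- Step 4: bound ‖adjoint B (xb t)‖² by γ² V t
  have hBb : ‖adjoint B (xb t)‖ ^ 2 ≤ γ ^ 2 * V t := by
    have hpos := hc.inner_nonneg_right (xb t)
    simp only [ContinuousLinearMap.sub_apply, ContinuousLinearMap.smul_apply,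
      ContinuousLinearMap.comp_apply, inner_sub_right, inner_smul_right,
      RCLike.re_to_real, smul_eq_mul] at hpos
    have e1 : ⟪xb t, B (adjoint B (xb t))⟫ = ‖adjoint B (xb t)‖ ^ 2 := by
      rw [← adjoint_inner_left B (adjoint B (xb t)) (xb t), real_inner_self_eq_norm_sq]
    have e2 : ⟪xb t, T (Q (adjoint T (xb t)))⟫ = V t := by
      rw [hV, ← adjoint_inner_left T (Q (adjoint T (xb t))) (xb t)]
    rw [← e1, ← e2]; linarith
  -- Step 5: combine
  have hCx : ‖C (x t)‖ ^ 2 = ⟪v, adjoint B (xb t)⟫ := by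
    have e1 : (‖C (x t)‖ : ℝ) ^ 2 = ⟪C (x t), C (x t)⟫ :=
      (real_inner_self_eq_norm_sq _).symm
    rw [e1]
    calc ⟪C (x t), C (x t)⟫ = ⟪x t, adjoint C (C (x t))⟫ := by
          rw [← adjoint_inner_left C (x t) (C (x t))]; exact real_inner_comm _ _
      _ = ⟪x t, adjoint T (xb 0)⟫ := by rw [hdual0]
      _ = ⟪T (x t), xb 0⟫ := by rw [adjoint_inner_right]
      _ = ⟪T (x 0), xb t⟫ := hpair
      _ = ⟪B v, xb t⟫ := by rw [hx0]
      _ = ⟪v, adjoint B (xb t)⟫ := by rw [adjoint_inner_right]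
  have hVt0 : 0 ≤ V t := by
    have := hQpos.inner_nonneg_right (adjoint T (xb t))
    simpa [hV] using this
  set r : ℝ := ‖C (x t)‖ with hr
  set β : ℝ := ‖adjoint B (xb t)‖ with hβ
  have hr0 : 0 ≤ r := norm_nonneg _
  have hβ0 : 0 ≤ β := norm_nonneg _
  have hB' : β ≤ γ * r := by
    have h2 : β ^ 2 ≤ (γ * r) ^ 2 := by
      have hγ2 : γ ^ 2 * V t ≤ γ ^ 2 * r ^ 2 := by
        have : V t ≤ r ^ 2 := le_trans hVle hV0
        nlinarith
      calc β ^ 2 ≤ γ ^ 2 * V t := hBb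
        _ ≤ γ ^ 2 * r ^ 2 := hγ2
        _ = (γ * r) ^ 2 := by ring
    have hnn : (0:ℝ) ≤ γ * r := by positivity
    nlinarith
  have hfinal : r ^ 2 ≤ γ * r * ‖v‖ := by
    calc r ^ 2 = ⟪v, adjoint B (xb t)⟫ := hCx
      _ ≤ ‖v‖ * β := real_inner_le_norm _ _
      _ ≤ ‖v‖ * (γ * r) := mul_le_mul_of_nonneg_left hB' (norm_nonneg v)
      _ = γ * r * ‖v‖ := by ring
  rcases eq_or_lt_of_le hr0 with h0 | h0
  · rw [← h0]; positivity
  · nlinarith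
end

section
/- Let γ > 0 and let Q : H →L[ℝ] H satisfy T ∘ Q = Q* ∘ T* with T ∘ Q positive. Assume (a) A ∘ Q + Q* ∘ A* ⪯ 0; (b) for all u ∈ E and y ∈ H, γ²·‖u‖² + 2·⟪u, B* y⟫ + ⟪y, (Q* ∘ T*) y⟫ ≥ 0; (c) for all y ∈ H and u ∈ F, ⟪y, (T ∘ Q) y⟫ + 2·⟪y, Q* (C* u)⟫ + ‖u‖² ≥ 0. Assume that for every v̄ ∈ F there exists a strong dual trajectory with initial data v̄. Then for every v ∈ E and every primal trajectory x with initial data v, one has ‖C (x t)‖ ≤ γ · ‖v‖ for all t ≥ 0. (Theorem 3(ii) in full: the dual non-coercive Lyapunov certificate, together with well-posedness of the dual, bounds the impulse-to-peak norm of the primal PIE.) -/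
open ContinuousLinearMap
open scoped RealInnerProductSpace

/-!
Fix `t ≥ 0` and take a dual trajectory `x̄` with initial data `v̄ = C (x t)`. The pairing
`s ↦ ⟪x̄ (t - s), T (x s)⟫` is constant, which gives `‖C (x t)‖² = ⟪B* (x̄ t), v⟫`.
Along the dual trajectory the storage `V = ⟪x̄, T Q x̄⟫` is nonincreasing by (a), starts below
`‖C (x t)‖²` by (c), and bounds `‖B* (x̄ t)‖² ≤ γ² V (t)` by (b). Cauchy–Schwarz then gives
`‖C (x t)‖² ≤ γ ‖C (x t)‖ ‖v‖`.
-/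

theorem norm_sq_le_mul_of_forall_quadratic_nonneg {E : Type*} [NormedAddCommGroup E]
    [InnerProductSpace ℝ E] {a c : ℝ} (ha : 0 < a) {w : E}
    (h : ∀ u : E, a * ‖u‖ ^ 2 + 2 * ⟪u, w⟫ + c ≥ 0) : ‖w‖ ^ 2 ≤ a * c := by
  have hu := h (-a⁻¹ • w)
  rw [norm_smul, inner_smul_left, real_inner_self_eq_norm_sq, norm_neg, Real.norm_eq_abs,
    abs_inv, abs_of_pos ha, conj_trivial] at hu
  have hsq : a * (a⁻¹ * ‖w‖) ^ 2 = a⁻¹ * ‖w‖ ^ 2 := by field_simp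
  rw [← inv_mul_le_iff₀ ha]
  linarith

section Trajectories

variable {H : Type*} [NormedAddCommGroup H] [InnerProductSpace ℝ H] [CompleteSpace H]

def IsPrimalTrajectory (T A : H →L[ℝ] H) (x : ℝ → H) : Prop :=
  ∀ t ≥ (0 : ℝ), HasDerivAt (fun s => T (x s)) (A (x t)) t

structure IsStrongDualTrajectory (T A : H →L[ℝ] H) (xb xb' : ℝ → H) : Prop where
  hasDerivAt : ∀ t, HasDerivAt xb (xb' t) t
  adjoint_deriv : ∀ t ≥ (0 : ℝ), adjoint T (xb' t) = adjoint A (xb t)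

theorem inner_dual_primal_symm {T A : H →L[ℝ] H} {x xb xb' : ℝ → H}
    (hx : IsPrimalTrajectory T A x) (hxb : IsStrongDualTrajectory T A xb xb') {t : ℝ}
    (ht : 0 ≤ t) : ⟪xb 0, T (x t)⟫ = ⟪xb t, T (x 0)⟫ := by
  set g : ℝ → ℝ := fun s => ⟪xb (t - s), T (x s)⟫
  have hg : ∀ s ∈ Set.Icc 0 t, HasDerivAt g 0 s := by
    intro s ⟨hs0, hst⟩
    have hderiv := ((hxb.hasDerivAt (t - s)).comp_const_sub t s).inner ℝ (hx s hs0)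
    have hcancel : ⟪xb' (t - s), T (x s)⟫ = ⟪xb (t - s), A (x s)⟫ := by
      rw [← adjoint_inner_left, hxb.adjoint_deriv _ (sub_nonneg.2 hst), adjoint_inner_left]
    rwa [inner_neg_left, hcancel, add_neg_cancel] at hderiv
  have hconst := constant_of_has_deriv_right_zero
    (fun s hs => (hg s hs).continuousAt.continuousWithinAt)
    (fun s hs => (hg s (Set.Ico_subset_Icc_self hs)).hasDerivWithinAt) t ⟨ht, le_rfl⟩
  simpa [g] using hconst

theorem lyapunov_antitoneOn {T A Q : H →L[ℝ] H} {xb xb' : ℝ → H}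
    (hQT : T ∘L Q = adjoint Q ∘L adjoint T)
    (ha : ((0 : H →L[ℝ] H) - (A ∘L Q + adjoint Q ∘L adjoint A)).IsPositive)
    (hxb : IsStrongDualTrajectory T A xb xb') :
    AntitoneOn (fun s => ⟪xb s, (T ∘L Q) (xb s)⟫) (Set.Ici 0) := by
  have hV : ∀ s, HasDerivAt (fun s => ⟪xb s, (T ∘L Q) (xb s)⟫)
      (⟪xb s, (T ∘L Q) (xb' s)⟫ + ⟪xb' s, (T ∘L Q) (xb s)⟫) s := fun s =>
    (hxb.hasDerivAt s).inner ℝ ((T ∘L Q).hasFDerivAt.comp_hasDerivAt s (hxb.hasDerivAt s))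
  refine antitoneOn_of_hasDerivWithinAt_nonpos (convex_Ici 0)
    (fun s _ => (hV s).continuousAt.continuousWithinAt) (fun s _ => (hV s).hasDerivWithinAt) ?_
  intro s hs
  rw [interior_Ici] at hs
  have hdual := hxb.adjoint_deriv s hs.le
  have h1 : ⟪xb' s, (T ∘L Q) (xb s)⟫ = ⟪xb s, A (Q (xb s))⟫ := by
    rw [comp_apply, ← adjoint_inner_left, hdual, adjoint_inner_left]
  have h2 : ⟪xb s, (T ∘L Q) (xb' s)⟫ = ⟪xb s, adjoint Q (adjoint A (xb s))⟫ := by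
    rw [hQT, comp_apply, hdual]
  have hneg := ha.inner_nonneg_right (xb s)
  simp only [zero_sub, neg_apply, add_apply, comp_apply, inner_neg_right, inner_add_right] at hneg
  linarith

theorem inner_comp_le_norm_sq_of_adjoint_eq {F : Type*} [NormedAddCommGroup F]
    [InnerProductSpace ℝ F] [CompleteSpace F] {T Q : H →L[ℝ] H} {C : H →L[ℝ] F}
    (hQT : T ∘L Q = adjoint Q ∘L adjoint T)
    (hc : ∀ (y : H) (u : F), ⟪y, (T ∘L Q) y⟫ + 2 * ⟪y, adjoint Q (adjoint C u)⟫ + ‖u‖ ^ 2 ≥ 0)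
    {y : H} {u : F} (hy : adjoint T y = adjoint C u) : ⟪y, (T ∘L Q) y⟫ ≤ ‖u‖ ^ 2 := by
  have hcross : ⟪y, adjoint Q (adjoint C u)⟫ = ⟪y, (T ∘L Q) y⟫ := by
    rw [hQT, comp_apply, hy]
  have h := hc (-y) u
  rw [map_neg, inner_neg_neg, inner_neg_left, hcross] at h
  linarith

end Trajectories

theorem stmt_12_general
    {H E F : Type*}
    [NormedAddCommGroup H] [InnerProductSpace ℝ H] [CompleteSpace H]
    [NormedAddCommGroup E] [InnerProductSpace ℝ E] [FiniteDimensional ℝ E]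
    [NormedAddCommGroup F] [InnerProductSpace ℝ F] [FiniteDimensional ℝ F]
    (T A : H →L[ℝ] H) (B : E →L[ℝ] H) (C : H →L[ℝ] F)
    (γ : ℝ) (hγ : 0 < γ)
    (Q : H →L[ℝ] H)
    (hQT : T ∘L Q = adjoint Q ∘L adjoint T)
    (ha : ((0 : H →L[ℝ] H) - (A ∘L Q + adjoint Q ∘L adjoint A)).IsPositive)
    (hb : ∀ (u : E) (y : H),
      γ ^ 2 * ‖u‖ ^ 2 + 2 * ⟪u, adjoint B y⟫ + ⟪y, (adjoint Q ∘L adjoint T) y⟫ ≥ 0)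
    (hc : ∀ (y : H) (u : F),
      ⟪y, (T ∘L Q) y⟫ + 2 * ⟪y, adjoint Q (adjoint C u)⟫ + ‖u‖ ^ 2 ≥ 0)
    (hwp : ∀ vb : F, ∃ xb xb' : ℝ → H,
      (∀ t : ℝ, HasDerivAt xb (xb' t) t) ∧
      (∀ t ≥ (0 : ℝ), adjoint T (xb' t) = adjoint A (xb t)) ∧
      adjoint T (xb 0) = adjoint C vb)
    (v : E) (x : ℝ → H)
    (hx : ∀ t ≥ (0 : ℝ), HasDerivAt (fun s => T (x s)) (A (x t)) t)
    (hx0 : T (x 0) = B v) :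
    ∀ t ≥ (0 : ℝ), ‖C (x t)‖ ≤ γ * ‖v‖ := by
  intro t ht
  obtain ⟨xb, xb', hderiv, hdual, hinit⟩ := hwp (C (x t))
  have hxb : IsStrongDualTrajectory T A xb xb' := ⟨hderiv, hdual⟩
  have hpair : ‖C (x t)‖ ^ 2 = ⟪adjoint B (xb t), v⟫ := by
    rw [← real_inner_self_eq_norm_sq, ← adjoint_inner_left, ← hinit, adjoint_inner_left,
      inner_dual_primal_symm hx hxb ht, hx0, adjoint_inner_left]
  have hBV : ‖adjoint B (xb t)‖ ^ 2 ≤ γ ^ 2 * ⟪xb t, (T ∘L Q) (xb t)⟫ :=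
    norm_sq_le_mul_of_forall_quadratic_nonneg (by positivity) (hQT ▸ hb · (xb t))
  have hV : ⟪xb t, (T ∘L Q) (xb t)⟫ ≤ ‖C (x t)‖ ^ 2 :=
    (lyapunov_antitoneOn hQT ha hxb Set.self_mem_Ici ht ht).trans
      (inner_comp_le_norm_sq_of_adjoint_eq hQT hc hinit)
  have hB : ‖adjoint B (xb t)‖ ≤ γ * ‖C (x t)‖ := by
    rw [← pow_le_pow_iff_left₀ (norm_nonneg _) (by positivity) two_ne_zero, mul_pow]
    exact hBV.trans (by gcongr)
  have hCS : ‖C (x t)‖ ^ 2 ≤ γ * ‖C (x t)‖ * ‖v‖ :=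
    hpair ▸ (real_inner_le_norm _ _).trans (by gcongr)
  nlinarith [norm_nonneg (C (x t)), mul_nonneg hγ.le (norm_nonneg v)]

/-- Theorem 3(ii) in full: the dual non-coercive Lyapunov certificate, together with
well-posedness of the dual, bounds the impulse-to-peak norm of the primal PIE. -/
theorem stmt_12
    {H E F : Type*}
    [NormedAddCommGroup H] [InnerProductSpace ℝ H] [CompleteSpace H]
    [NormedAddCommGroup E] [InnerProductSpace ℝ E] [FiniteDimensional ℝ E]
    [NormedAddCommGroup F] [InnerProductSpace ℝ F] [FiniteDimensional ℝ F]
    (T A : H →L[ℝ] H) (B : E →L[ℝ] H) (C : H →L[ℝ] F)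
    (γ : ℝ) (hγ : 0 < γ)
    (Q : H →L[ℝ] H)
    (hQT : T ∘L Q = adjoint Q ∘L adjoint T)
    (hQTpos : (T ∘L Q).IsPositive)
    (ha : ((0 : H →L[ℝ] H) - (A ∘L Q + adjoint Q ∘L adjoint A)).IsPositive)
    (hb : ∀ (u : E) (y : H),
      γ ^ 2 * ‖u‖ ^ 2 + 2 * ⟪u, adjoint B y⟫ + ⟪y, (adjoint Q ∘L adjoint T) y⟫ ≥ 0)
    (hc : ∀ (y : H) (u : F),
      ⟪y, (T ∘L Q) y⟫ + 2 * ⟪y, adjoint Q (adjoint C u)⟫ + ‖u‖ ^ 2 ≥ 0)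
    (hwp : ∀ vb : F, ∃ xb xb' : ℝ → H,
      (∀ t : ℝ, HasDerivAt xb (xb' t) t) ∧
      (∀ t ≥ (0 : ℝ), adjoint T (xb' t) = adjoint A (xb t)) ∧
      adjoint T (xb 0) = adjoint C vb)
    (v : E) (x : ℝ → H)
    (hx : ∀ t ≥ (0 : ℝ), HasDerivAt (fun s => T (x s)) (A (x t)) t)
    (hx0 : T (x 0) = B v) :
    ∀ t ≥ (0 : ℝ), ‖C (x t)‖ ≤ γ * ‖v‖ :=
  stmt_12_general T A B C γ hγ Q hQT ha hb hc hwp v x hx hx0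
end

section
/- Let γ > 0, let Q : H →L[ℝ] H be self-adjoint, positive, and possess a continuous linear inverse Q⁻¹, let Z : H →L[ℝ] U, and set K := Z ∘ Q⁻¹. Assume (a) A ∘ Q ∘ T* + B₂ ∘ Z ∘ T* + T ∘ Q ∘ A* + T ∘ Z* ∘ B₂* ⪯ 0; (b) B ∘ B* ⪯ γ² • (T ∘ Q ∘ T*); (c) for all u ∈ F and y ∈ H, ‖u‖² + 2·⟪u, C (Q y) + D (Z y)⟫ + ⟪y, Q y⟫ ≥ 0 (positivity of the block [I, CQ+DZ; (CQ+DZ)*, Q]). Then the closed-loop operators A_cl := A + B₂ ∘ K and C_cl := C + D ∘ K satisfy the dual coercive certificate conditions: A_cl ∘ Q ∘ T* + T ∘ Q ∘ A_cl* ⪯ 0, C_cl ∘ Q ∘ C_cl* ⪯ id_F, and B ∘ B* ⪯ γ² • (T ∘ Q ∘ T*). (Algebraic core of Corollary 1(i): the synthesis LPI conditions imply the Theorem 2(ii) conditions for the closed-loop system with gain K = Z Q⁻¹.) -/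
open ContinuousLinearMap
open scoped RealInnerProductSpace

/-!
With `K = Z Q⁻¹` we have `K Q = Z`, so the closed-loop products `(A + B₂ K) Q` and `(C + D K) Q`
are the affine expressions `A Q + B₂ Z` and `C Q + D Z`. Since `Q` is self-adjoint, condition (a) is
then literally the closed-loop Lyapunov inequality, and evaluating the block inequality (c) at
`y = -C_cl* u` leaves exactly the Schur complement `‖u‖² - ⟪u, C_cl Q C_cl* u⟫ ≥ 0`.
-/

section

variable {H F U : Type*}
  [NormedAddCommGroup H] [InnerProductSpace ℝ H] [CompleteSpace H]
  [NormedAddCommGroup F] [InnerProductSpace ℝ F] [CompleteSpace F]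
  [NormedAddCommGroup U] [InnerProductSpace ℝ U] [CompleteSpace U]

theorem closedLoop_lyapunov_eq {T A Q : H →L[ℝ] H} {B₂ : U →L[ℝ] H} {K Z : H →L[ℝ] U}
    (hQ : IsSelfAdjoint Q) (hKQ : K ∘L Q = Z) :
    (A + B₂ ∘L K) ∘L Q ∘L adjoint T + T ∘L Q ∘L adjoint (A + B₂ ∘L K) =
      A ∘L Q ∘L adjoint T + B₂ ∘L Z ∘L adjoint T +
        T ∘L Q ∘L adjoint A + T ∘L adjoint Z ∘L adjoint B₂ := by
  have hQAcl : Q ∘L adjoint (A + B₂ ∘L K) = Q ∘L adjoint A + adjoint Z ∘L adjoint B₂ := by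
    rw [← hQ.adjoint_eq, ← adjoint_comp, add_comp, comp_assoc, hKQ, map_add, adjoint_comp,
      adjoint_comp]
  rw [hQAcl, ← comp_assoc, add_comp, comp_assoc, hKQ]
  simp only [add_comp, comp_add, comp_assoc]
  abel

theorem isPositive_id_sub_comp_adjoint_of_schur {Q : H →L[ℝ] H} (hQ : IsSelfAdjoint Q)
    {G : H →L[ℝ] F} (hG : ∀ (u : F) (y : H), ‖u‖ ^ 2 + 2 * ⟪u, G (Q y)⟫ + ⟪y, Q y⟫ ≥ 0) :
    (ContinuousLinearMap.id ℝ F - G ∘L Q ∘L adjoint G).IsPositive := by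
  refine (isPositive_iff' _).2 ⟨isPositive_id.isSelfAdjoint.sub (hQ.conj_adjoint G), fun u => ?_⟩
  have h := hG u (-(adjoint G u))
  rw [map_neg, map_neg, inner_neg_right, inner_neg_left, inner_neg_right, neg_neg,
    adjoint_inner_left, ← real_inner_self_eq_norm_sq] at h
  simp only [sub_apply, id_apply, comp_apply, real_inner_comm u, inner_sub_right]
  linarith

end

theorem stmt_14_general
    {H E F U : Type*}
    [NormedAddCommGroup H] [InnerProductSpace ℝ H] [CompleteSpace H]
    [NormedAddCommGroup E] [InnerProductSpace ℝ E] [FiniteDimensional ℝ E]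
    [NormedAddCommGroup F] [InnerProductSpace ℝ F] [FiniteDimensional ℝ F]
    [NormedAddCommGroup U] [InnerProductSpace ℝ U] [FiniteDimensional ℝ U]
    (T A : H →L[ℝ] H) (B : E →L[ℝ] H) (B₂ : U →L[ℝ] H)
    (C : H →L[ℝ] F) (D : U →L[ℝ] F)
    (γ : ℝ)
    (Q : H →L[ℝ] H) (hQsa : IsSelfAdjoint Q)
    (Qinv : H →L[ℝ] H)
    (hQinv₂ : Qinv ∘L Q = ContinuousLinearMap.id ℝ H)
    (Z : H →L[ℝ] U)
    (ha : ((0 : H →L[ℝ] H) -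
      (A ∘L Q ∘L adjoint T + B₂ ∘L Z ∘L adjoint T +
        T ∘L Q ∘L adjoint A + T ∘L adjoint Z ∘L adjoint B₂)).IsPositive)
    (hb : ((γ ^ 2) • (T ∘L Q ∘L adjoint T) - B ∘L adjoint B).IsPositive)
    (hc : ∀ (u : F) (y : H),
      ‖u‖ ^ 2 + 2 * ⟪u, C (Q y) + D (Z y)⟫ + ⟪y, Q y⟫ ≥ 0) :
    ((0 : H →L[ℝ] H) -
      ((A + B₂ ∘L (Z ∘L Qinv)) ∘L Q ∘L adjoint T +
        T ∘L Q ∘L adjoint (A + B₂ ∘L (Z ∘L Qinv)))).IsPositive ∧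
    (ContinuousLinearMap.id ℝ F -
      (C + D ∘L (Z ∘L Qinv)) ∘L Q ∘L adjoint (C + D ∘L (Z ∘L Qinv))).IsPositive ∧
    ((γ ^ 2) • (T ∘L Q ∘L adjoint T) - B ∘L adjoint B).IsPositive := by
  have hKQ : (Z ∘L Qinv) ∘L Q = Z := by rw [comp_assoc, hQinv₂, comp_id]
  refine ⟨?_, ?_, hb⟩
  · rwa [closedLoop_lyapunov_eq hQsa hKQ]
  · refine isPositive_id_sub_comp_adjoint_of_schur hQsa fun u y => ?_
    have hCcl : (C + D ∘L (Z ∘L Qinv)) (Q y) = C (Q y) + D (Z y) := by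
      rw [add_apply, comp_apply, ← comp_apply (Z ∘L Qinv) Q, hKQ]
    exact hCcl ▸ hc u y

/-- Algebraic core of Corollary 1(i): the synthesis LPI conditions imply the
Theorem 2(ii) conditions for the closed-loop system with gain `K = Z Q⁻¹`. -/
theorem stmt_14
    {H E F U : Type*}
    [NormedAddCommGroup H] [InnerProductSpace ℝ H] [CompleteSpace H]
    [NormedAddCommGroup E] [InnerProductSpace ℝ E] [FiniteDimensional ℝ E]
    [NormedAddCommGroup F] [InnerProductSpace ℝ F] [FiniteDimensional ℝ F]
    [NormedAddCommGroup U] [InnerProductSpace ℝ U] [FiniteDimensional ℝ U]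
    (T A : H →L[ℝ] H) (B : E →L[ℝ] H) (B₂ : U →L[ℝ] H)
    (C : H →L[ℝ] F) (D : U →L[ℝ] F)
    (γ : ℝ) (hγ : 0 < γ)
    (Q : H →L[ℝ] H) (hQsa : IsSelfAdjoint Q) (hQpos : Q.IsPositive)
    (Qinv : H →L[ℝ] H)
    (hQinv₁ : Q ∘L Qinv = ContinuousLinearMap.id ℝ H)
    (hQinv₂ : Qinv ∘L Q = ContinuousLinearMap.id ℝ H)
    (Z : H →L[ℝ] U)
    (ha : ((0 : H →L[ℝ] H) -
      (A ∘L Q ∘L adjoint T + B₂ ∘L Z ∘L adjoint T +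
        T ∘L Q ∘L adjoint A + T ∘L adjoint Z ∘L adjoint B₂)).IsPositive)
    (hb : ((γ ^ 2) • (T ∘L Q ∘L adjoint T) - B ∘L adjoint B).IsPositive)
    (hc : ∀ (u : F) (y : H),
      ‖u‖ ^ 2 + 2 * ⟪u, C (Q y) + D (Z y)⟫ + ⟪y, Q y⟫ ≥ 0) :
    ((0 : H →L[ℝ] H) -
      ((A + B₂ ∘L (Z ∘L Qinv)) ∘L Q ∘L adjoint T +
        T ∘L Q ∘L adjoint (A + B₂ ∘L (Z ∘L Qinv)))).IsPositive ∧
    (ContinuousLinearMap.id ℝ F -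
      (C + D ∘L (Z ∘L Qinv)) ∘L Q ∘L adjoint (C + D ∘L (Z ∘L Qinv))).IsPositive ∧
    ((γ ^ 2) • (T ∘L Q ∘L adjoint T) - B ∘L adjoint B).IsPositive :=
  stmt_14_general T A B B₂ C D γ Q hQsa Qinv hQinv₂ Z ha hb hc
end

section
/- Let γ > 0, let Q : H →L[ℝ] H be self-adjoint, positive, and possess a continuous linear inverse Q⁻¹, let Z : H →L[ℝ] U, and set K := Z ∘ Q⁻¹, A_cl := A + B₂ ∘ K, C_cl := C + D ∘ K. Assume (a) A ∘ Q ∘ T* + B₂ ∘ Z ∘ T* + T ∘ Q ∘ A* + T ∘ Z* ∘ B₂* ⪯ 0; (b) B ∘ B* ⪯ γ² • (T ∘ Q ∘ T*); (c) for all u ∈ F and y ∈ H, ‖u‖² + 2·⟪u, C (Q y) + D (Z y)⟫ + ⟪y, Q y⟫ ≥ 0. Then for every v̄ ∈ F and every differentiable x̄ : ℝ → H with derivative x̄' satisfying T* (x̄' t) = A_cl* (x̄ t) for all t ≥ 0 and T* (x̄ 0) = C_cl* v̄, one has ‖B* (x̄ t)‖ ≤ γ · ‖v̄‖ for all t ≥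 0. (Corollary 1(i), dual form: the synthesis conditions certify the impulse-to-peak bound for the dual of the closed-loop PIE under state feedback u = K x.) -/
open ContinuousLinearMap
open scoped RealInnerProductSpace

set_option maxHeartbeats 1000000

/-- Corollary 1(i), dual form: the synthesis conditions certify the impulse-to-peak
bound for the dual of the closed-loop PIE under state feedback `u = K x`. -/
theorem stmt_15
    {H E F U : Type*}
    [NormedAddCommGroup H] [InnerProductSpace ℝ H] [CompleteSpace H]
    [NormedAddCommGroup E] [InnerProductSpace ℝ E] [FiniteDimensional ℝ E]
    [NormedAddCommGroup F] [InnerProductSpace ℝ F] [FiniteDimensional ℝ F]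
    [NormedAddCommGroup U] [InnerProductSpace ℝ U] [FiniteDimensional ℝ U]
    (T A : H →L[ℝ] H) (B : E →L[ℝ] H) (B₂ : U →L[ℝ] H)
    (C : H →L[ℝ] F) (D : U →L[ℝ] F)
    (γ : ℝ) (hγ : 0 < γ)
    (Q : H →L[ℝ] H) (hQsa : IsSelfAdjoint Q) (hQpos : Q.IsPositive)
    (Qinv : H →L[ℝ] H)
    (hQinv₁ : Q ∘L Qinv = ContinuousLinearMap.id ℝ H)
    (hQinv₂ : Qinv ∘L Q = ContinuousLinearMap.id ℝ H)
    (Z : H →L[ℝ] U)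
    (ha : ((0 : H →L[ℝ] H) -
      (A ∘L Q ∘L adjoint T + B₂ ∘L Z ∘L adjoint T +
        T ∘L Q ∘L adjoint A + T ∘L adjoint Z ∘L adjoint B₂)).IsPositive)
    (hb : ((γ ^ 2) • (T ∘L Q ∘L adjoint T) - B ∘L adjoint B).IsPositive)
    (hc : ∀ (u : F) (y : H),
      ‖u‖ ^ 2 + 2 * ⟪u, C (Q y) + D (Z y)⟫ + ⟪y, Q y⟫ ≥ 0)
    (vb : F) (xb xb' : ℝ → H)
    (hxbderiv : ∀ t : ℝ, HasDerivAt xb (xb' t) t)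
    (hxbdyn : ∀ t ≥ (0 : ℝ),
      adjoint T (xb' t) = adjoint (A + B₂ ∘L (Z ∘L Qinv)) (xb t))
    (hxb0 : adjoint T (xb 0) = adjoint (C + D ∘L (Z ∘L Qinv)) vb) :
    ∀ t ≥ (0 : ℝ), ‖adjoint B (xb t)‖ ≤ γ * ‖vb‖ := by
  -- preliminaries
  have hQad : adjoint Q = Q := by
    rw [← ContinuousLinearMap.star_eq_adjoint]; exact hQsa
  have hQQ : ∀ w : H, Qinv (Q w) = w := fun w => by
    have := ContinuousLinearMap.ext_iff.1 hQinv₂ w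
    simpa using this
  have hQQad : ∀ w : H, Q (adjoint Qinv w) = w := by
    have h : adjoint Q ∘L adjoint Qinv = ContinuousLinearMap.id ℝ H := by
      rw [← adjoint_comp, hQinv₂]; simp [adjoint_id]
    rw [hQad] at h
    intro w
    have := ContinuousLinearMap.ext_iff.1 h w
    simpa using this
  have hAcladj : adjoint (A + B₂ ∘L (Z ∘L Qinv)) =
      adjoint A + adjoint Qinv ∘L (adjoint Z ∘L adjoint B₂) := by
    simp [map_add, adjoint_comp, ContinuousLinearMap.comp_assoc]
  -- key operator identity
  have hop : (A + B₂ ∘L (Z ∘L Qinv)) ∘L (Q ∘L adjoint T) +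
      T ∘L (Q ∘L adjoint (A + B₂ ∘L (Z ∘L Qinv))) =
      A ∘L Q ∘L adjoint T + B₂ ∘L Z ∘L adjoint T +
        T ∘L Q ∘L adjoint A + T ∘L adjoint Z ∘L adjoint B₂ := by
    ext x
    simp only [hAcladj, add_apply, comp_apply, map_add, hQQ, hQQad]
    abel
  set W : ℝ → ℝ := fun s => ⟪xb s, (T ∘L Q ∘L adjoint T) (xb s)⟫ with hW
  -- derivative of W
  have hW' : ∀ s : ℝ,
      HasDerivAt W (⟪xb s, (T ∘L Q ∘L adjoint T) (xb' s)⟫ +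
        ⟪xb' s, (T ∘L Q ∘L adjoint T) (xb s)⟫) s := by
    intro s
    have hMx : HasDerivAt (fun r => (T ∘L Q ∘L adjoint T) (xb r))
        ((T ∘L Q ∘L adjoint T) (xb' s)) s :=
      (T ∘L Q ∘L adjoint T).hasFDerivAt.comp_hasDerivAt s (hxbderiv s)
    exact (hxbderiv s).inner ℝ hMx
  -- the derivative is nonpositive for s ≥ 0
  have hderivle : ∀ s ≥ (0:ℝ),
      ⟪xb s, (T ∘L Q ∘L adjoint T) (xb' s)⟫ +
        ⟪xb' s, (T ∘L Q ∘L adjoint T) (xb s)⟫ ≤ 0 := by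
    intro s hs
    have hdyn := hxbdyn s hs
    set Acl : H →L[ℝ] H := A + B₂ ∘L (Z ∘L Qinv) with hAclDef
    set y := xb s with hy
    set S : H →L[ℝ] H := A ∘L Q ∘L adjoint T + B₂ ∘L Z ∘L adjoint T +
        T ∘L Q ∘L adjoint A + T ∘L adjoint Z ∘L adjoint B₂ with hS
    have e1 : ⟪xb' s, (T ∘L Q ∘L adjoint T) y⟫ =
        ⟪y, (Acl ∘L (Q ∘L adjoint T)) y⟫ := by
      calc ⟪xb' s, (T ∘L Q ∘L adjoint T) y⟫
          = ⟪xb' s, T (Q (adjoint T y))⟫ := rfl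
        _ = ⟪adjoint T (xb' s), Q (adjoint T y)⟫ :=
            (ContinuousLinearMap.adjoint_inner_left T _ _).symm
        _ = ⟪adjoint Acl y, Q (adjoint T y)⟫ := by rw [hdyn]
        _ = ⟪y, Acl (Q (adjoint T y))⟫ :=
            ContinuousLinearMap.adjoint_inner_left Acl _ _
        _ = ⟪y, (Acl ∘L (Q ∘L adjoint T)) y⟫ := rfl
    have e2 : ⟪y, (T ∘L Q ∘L adjoint T) (xb' s)⟫ =
        ⟪y, (T ∘L (Q ∘L adjoint Acl)) y⟫ := by
      calc ⟪y, (T ∘L Q ∘L adjoint T) (xb' s)⟫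
          = ⟪y, T (Q (adjoint T (xb' s)))⟫ := rfl
        _ = ⟪y, T (Q (adjoint Acl y))⟫ := by rw [hdyn]
        _ = ⟪y, (T ∘L (Q ∘L adjoint Acl)) y⟫ := rfl
    have hSy : ⟪S y, y⟫ ≤ 0 := by
      have := ha.inner_nonneg_left y
      simp only [RCLike.re_to_real, sub_apply, zero_apply, inner_sub_left,
        inner_zero_left, ← hS] at this
      linarith
    have hsum : ⟪y, (T ∘L Q ∘L adjoint T) (xb' s)⟫ +
        ⟪xb' s, (T ∘L Q ∘L adjoint T) y⟫ = ⟪S y, y⟫ := by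
      rw [e1, e2, ← inner_add_right]
      have hpt : (T ∘L (Q ∘L adjoint Acl)) y + (Acl ∘L (Q ∘L adjoint T)) y
          = S y := by
        rw [← add_apply, add_comm ((T ∘L (Q ∘L adjoint Acl))), hAclDef, hop, hS]
      rw [hpt, real_inner_comm]
    linarith [hsum, hSy]
  -- W is antitone on [0, ∞)
  have hanti : AntitoneOn W (Set.Ici (0:ℝ)) := by
    apply antitoneOn_of_deriv_nonpos (convex_Ici 0)
    · exact fun s _ => (hW' s).continuousAt.continuousWithinAt
    · exact fun s _ => (hW' s).differentiableAt.differentiableWithinAt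
    · intro s hs
      rw [(hW' s).deriv]
      exact hderivle s (le_of_lt (by simpa using hs))
  -- initial bound : W 0 ≤ ‖vb‖ ^ 2
  have hW0 : W 0 ≤ ‖vb‖ ^ 2 := by
    set w : H := adjoint (C + D ∘L (Z ∘L Qinv)) vb with hw
    have hW0eq : W 0 = ⟪w, Q w⟫ := by
      have : W 0 = ⟪xb 0, T (Q (adjoint T (xb 0)))⟫ := rfl
      rw [this, ← ContinuousLinearMap.adjoint_inner_left T, hxb0]
    have hCcl : C (Q w) + D (Z w) = (C + D ∘L (Z ∘L Qinv)) (Q w) := by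
      simp [hQQ]
    have hinner : ⟪vb, C (Q w) + D (Z w)⟫ = ⟪w, Q w⟫ := by
      rw [hCcl, ← ContinuousLinearMap.adjoint_inner_left]
    have h := hc vb (-w)
    have hA1 : ⟪vb, C (Q (-w)) + D (Z (-w))⟫ = -⟪w, Q w⟫ := by
      have hneg : C (Q (-w)) + D (Z (-w)) = -(C (Q w) + D (Z w)) := by
        simp only [map_neg]; abel
      rw [hneg, inner_neg_right, hinner]
    have hA2 : ⟪(-w : H), Q (-w)⟫ = ⟪w, Q w⟫ := by
      rw [map_neg, inner_neg_neg]
    rw [hA1, hA2] at h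
    rw [hW0eq]
    linarith
  -- final bound
  intro t ht
  have hWt : W t ≤ W 0 := hanti Set.self_mem_Ici ht ht
  have hBB : ‖adjoint B (xb t)‖ ^ 2 ≤ γ ^ 2 * W t := by
    have hpos := hb.inner_nonneg_left (xb t)
    simp only [RCLike.re_to_real, sub_apply, smul_apply,
      inner_sub_left, inner_smul_left, RCLike.conj_to_real] at hpos
    have hadj : ⟪(B ∘L adjoint B) (xb t), xb t⟫ = ‖adjoint B (xb t)‖ ^ 2 := by
      rw [← real_inner_self_eq_norm_sq]
      exact (ContinuousLinearMap.adjoint_inner_right B _ _).symm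
    have hMW : ⟪(T ∘L Q ∘L adjoint T) (xb t), xb t⟫ = W t :=
      real_inner_comm _ _
    rw [hadj, hMW] at hpos
    linarith
  have h1 : γ ^ 2 * W t ≤ γ ^ 2 * ‖vb‖ ^ 2 := by
    have h2 := hWt.trans hW0
    nlinarith [sq_nonneg γ]
  have hfinal : ‖adjoint B (xb t)‖ ^ 2 ≤ (γ * ‖vb‖) ^ 2 := by
    nlinarith
  nlinarith [norm_nonneg (adjoint B (xb t)), norm_nonneg vb,
    mul_nonneg hγ.le (norm_nonneg vb)]
end

section
/- Let γ > 0, let Q : H →L[ℝ] H be self-adjoint, positive, and possess a continuous linear inverse Q⁻¹, let Z : H →L[ℝ] U, and set K := Z ∘ Q⁻¹, A_cl := A + B₂ ∘ K, C_cl := C + D ∘ K. Assume (a) A ∘ Q ∘ T* + B₂ ∘ Z ∘ T* + T ∘ Q ∘ A* + T ∘ Z* ∘ B₂* ⪯ 0; (b) B ∘ B* ⪯ γ² • (T ∘ Q ∘ T*); (c) for all u ∈ F and y ∈ H, ‖u‖² + 2·⟪u, C (Q y) + D (Z y)⟫ + ⟪y, Q y⟫ ≥ 0. Assume moreover that for every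 v̄ ∈ F there exists a differentiable x̄ : ℝ → H with derivative x̄' satisfying T* (x̄' t) = A_cl* (x̄ t) for all t ≥ 0 and T* (x̄ 0) = C_cl* v̄. Then for every v ∈ E and every x : ℝ → H such that for each t ≥ 0 the map s ↦ T (x s) has derivative A_cl (x t) at t and T (x 0) = B v, one has ‖C_cl (x t)‖ ≤ γ · ‖v‖ for all t ≥ 0. (Corollary 1(i) in full: under the feedback u = K x with K = Z Q⁻¹, the closed-loop impulse-to-peak norm is at most γ.) -/
open ContinuousLinearMap
open scoped RealInnerProductSpace

set_option maxHeartbeats 1000000 in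
/-- Corollary 1(i) in full: under the feedback `u = K x` with `K = Z Q⁻¹`,
the closed-loop impulse-to-peak norm is at most `γ`. -/
theorem stmt_16
    {H E F U : Type*}
    [NormedAddCommGroup H] [InnerProductSpace ℝ H] [CompleteSpace H]
    [NormedAddCommGroup E] [InnerProductSpace ℝ E] [FiniteDimensional ℝ E]
    [NormedAddCommGroup F] [InnerProductSpace ℝ F] [FiniteDimensional ℝ F]
    [NormedAddCommGroup U] [InnerProductSpace ℝ U] [FiniteDimensional ℝ U]
    (T A : H →L[ℝ] H) (B : E →L[ℝ] H) (B₂ : U →L[ℝ] H)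
    (C : H →L[ℝ] F) (D : U →L[ℝ] F)
    (γ : ℝ) (hγ : 0 < γ)
    (Q : H →L[ℝ] H) (hQsa : IsSelfAdjoint Q) (hQpos : Q.IsPositive)
    (Qinv : H →L[ℝ] H)
    (hQinv₁ : Q ∘L Qinv = ContinuousLinearMap.id ℝ H)
    (hQinv₂ : Qinv ∘L Q = ContinuousLinearMap.id ℝ H)
    (Z : H →L[ℝ] U)
    (ha : ((0 : H →L[ℝ] H) -
      (A ∘L Q ∘L adjoint T + B₂ ∘L Z ∘L adjoint T +
        T ∘L Q ∘L adjoint A + T ∘L adjoint Z ∘L adjoint B₂)).IsPositive)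
    (hb : ((γ ^ 2) • (T ∘L Q ∘L adjoint T) - B ∘L adjoint B).IsPositive)
    (hc : ∀ (u : F) (y : H),
      ‖u‖ ^ 2 + 2 * ⟪u, C (Q y) + D (Z y)⟫ + ⟪y, Q y⟫ ≥ 0)
    (hwp : ∀ vb : F, ∃ xb xb' : ℝ → H,
      (∀ t : ℝ, HasDerivAt xb (xb' t) t) ∧
      (∀ t ≥ (0 : ℝ),
        adjoint T (xb' t) = adjoint (A + B₂ ∘L (Z ∘L Qinv)) (xb t)) ∧
      adjoint T (xb 0) = adjoint (C + D ∘L (Z ∘L Qinv)) vb)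
    (v : E) (x : ℝ → H)
    (hx : ∀ t ≥ (0 : ℝ),
      HasDerivAt (fun s => T (x s)) ((A + B₂ ∘L (Z ∘L Qinv)) (x t)) t)
    (hx0 : T (x 0) = B v) :
    ∀ t ≥ (0 : ℝ), ‖(C + D ∘L (Z ∘L Qinv)) (x t)‖ ≤ γ * ‖v‖ := by
  intro t ht
  -- notation
  have hQadj : adjoint Q = Q := hQsa.adjoint_eq
  have hQ : ∀ a b : H, ⟪Q a, b⟫ = ⟪a, Q b⟫ := by
    intro a b; conv_lhs => rw [← hQadj]
    rw [adjoint_inner_left]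
  have hQinv : ∀ w : H, Qinv (Q w) = w := by
    intro w
    have := congrArg (fun f : H →L[ℝ] H => f w) hQinv₂
    simpa using this
  set Acl := A + B₂ ∘L (Z ∘L Qinv) with hAcldef
  set Ccl := C + D ∘L (Z ∘L Qinv) with hCcldef
  set vb := Ccl (x t) with hvbdef
  obtain ⟨xb, xb', hxb, hode, h0⟩ := hwp vb
  -- Ccl composed with Q
  have hCclQ : ∀ w : H, Ccl (Q w) = C (Q w) + D (Z w) := by
    intro w
    simp [hCcldef, hQinv w]
  have hAclQ : ∀ w : H, Acl (Q w) = A (Q w) + B₂ (Z w) := by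
    intro w
    simp [hAcldef, hQinv w]
  -- Step 1: the pairing function g is constant on [0, t]
  set g : ℝ → ℝ := fun s => ⟪xb (t - s), T (x s)⟫ with hgdef
  have hgd : ∀ s ∈ Set.Icc (0:ℝ) t, HasDerivAt g 0 s := by
    intro s hs
    have h1 : HasDerivAt (fun s => xb (t - s)) ((-1 : ℝ) • xb' (t - s)) s :=
      (hxb (t - s)).scomp s ((hasDerivAt_id s).const_sub t)
    have h2 : HasDerivAt (fun s => T (x s)) (Acl (x s)) s := hx s hs.1
    have hd := HasDerivAt.inner ℝ h1 h2
    have key : ⟪xb (t - s), Acl (x s)⟫ + ⟪(-1 : ℝ) • xb' (t - s), T (x s)⟫ = 0 := by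
      have h3 : adjoint T (xb' (t - s)) = adjoint Acl (xb (t - s)) :=
        hode (t - s) (by linarith [hs.2])
      have h4 := congrArg (fun w : H => ⟪w, x s⟫) h3
      simp only [adjoint_inner_left] at h4
      rw [real_inner_smul_left]
      linarith
    rw [key] at hd
    exact hd
  have hgc : g t = g 0 := by
    have hcont : ContinuousOn g (Set.Icc 0 t) :=
      fun s hs => (hgd s hs).continuousAt.continuousWithinAt
    exact constant_of_has_deriv_right_zero hcont
      (fun s hs => (hgd s (Set.mem_Icc_of_Ico hs)).hasDerivWithinAt)
      t (Set.right_mem_Icc.2 ht)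
  -- consequence: ⟪vb, vb⟫ = ⟪B* (xb t), v⟫
  have hpair : ⟪vb, vb⟫ = ⟪adjoint B (xb t), v⟫ := by
    have e1 : g t = ⟪vb, vb⟫ := by
      show ⟪xb (t - t), T (x t)⟫ = _
      rw [sub_self]
      calc ⟪xb 0, T (x t)⟫ = ⟪adjoint T (xb 0), x t⟫ := (adjoint_inner_left T _ _).symm
        _ = ⟪adjoint Ccl vb, x t⟫ := by rw [h0]
        _ = ⟪vb, Ccl (x t)⟫ := adjoint_inner_left Ccl _ _
        _ = ⟪vb, vb⟫ := by rw [← hvbdef]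
    have e2 : g 0 = ⟪adjoint B (xb t), v⟫ := by
      show ⟪xb (t - 0), T (x 0)⟫ = _
      rw [sub_zero, hx0, adjoint_inner_left]
    rw [← e1, ← e2, hgc]
  -- Step 2: the Lyapunov-type function h is antitone on [0, t]
  have hp : ∀ s : ℝ, HasDerivAt (fun u => adjoint T (xb u)) (adjoint T (xb' s)) s :=
    fun s => ((adjoint T).hasFDerivAt.comp_hasDerivAt s (hxb s))
  have hq : ∀ s : ℝ, HasDerivAt (fun u => Q (adjoint T (xb u))) (Q (adjoint T (xb' s))) s :=
    fun s => (Q.hasFDerivAt.comp_hasDerivAt s (hp s))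
  set h : ℝ → ℝ := fun s => ⟪adjoint T (xb s), Q (adjoint T (xb s))⟫ with hhdef
  have hhd : ∀ s : ℝ, HasDerivAt h
      (⟪adjoint T (xb s), Q (adjoint T (xb' s))⟫ + ⟪adjoint T (xb' s), Q (adjoint T (xb s))⟫) s :=
    fun s => HasDerivAt.inner ℝ (hp s) (hq s)
  have hderiv_nonpos : ∀ s ≥ (0:ℝ),
      ⟪adjoint T (xb s), Q (adjoint T (xb' s))⟫ + ⟪adjoint T (xb' s), Q (adjoint T (xb s))⟫ ≤ 0 := by
    intro s hs
    set y := xb s with hydef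
    have hTs : adjoint T (xb' s) = adjoint Acl y := hode s hs
    set w := adjoint T y with hwdef
    -- each of the two terms equals ⟪y, Acl (Q w)⟫
    have t1 : ⟪adjoint T (xb' s), Q w⟫ = ⟪y, Acl (Q w)⟫ := by
      rw [hTs, adjoint_inner_left]
    have t2 : ⟪w, Q (adjoint T (xb' s))⟫ = ⟪y, Acl (Q w)⟫ := by
      rw [real_inner_comm, hQ, ← t1, real_inner_comm, hQ]
    have hM := ha.inner_nonneg_left y
    simp only [sub_apply, zero_apply, add_apply, comp_apply, RCLike.re_to_real] at hM
    have hMy : ⟪A (Q (adjoint T y)) + B₂ (Z (adjoint T y)) +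
        T (Q (adjoint A y)) + T (adjoint Z (adjoint B₂ y)), y⟫ ≤ 0 := by
      have : (0:ℝ) ≤ ⟪(0:H) - (A (Q (adjoint T y)) + B₂ (Z (adjoint T y)) +
          T (Q (adjoint A y)) + T (adjoint Z (adjoint B₂ y))), y⟫ := by
        simpa using hM
      rw [zero_sub, inner_neg_left] at this
      linarith
    -- rewrite hMy as 2 * ⟪y, Acl (Q w)⟫ ≤ 0
    have expand : ⟪A (Q (adjoint T y)) + B₂ (Z (adjoint T y)) +
        T (Q (adjoint A y)) + T (adjoint Z (adjoint B₂ y)), y⟫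
        = 2 * ⟪y, Acl (Q w)⟫ := by
      rw [inner_add_left, inner_add_left, inner_add_left]
      have e1 : ⟪A (Q (adjoint T y)), y⟫ = ⟪y, A (Q w)⟫ := by
        rw [real_inner_comm, hwdef]
      have e2 : ⟪B₂ (Z (adjoint T y)), y⟫ = ⟪y, B₂ (Z w)⟫ := by
        rw [real_inner_comm, hwdef]
      have e3 : ⟪T (Q (adjoint A y)), y⟫ = ⟪y, A (Q w)⟫ := by
        rw [← adjoint_inner_right T, ← hwdef, hQ, adjoint_inner_left]
      have e4 : ⟪T (adjoint Z (adjoint B₂ y)), y⟫ = ⟪y, B₂ (Z w)⟫ := by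
        rw [← adjoint_inner_right T, ← hwdef, adjoint_inner_left, adjoint_inner_left]
      rw [e1, e2, e3, e4, hAclQ w, inner_add_right]
      ring
    rw [expand] at hMy
    have hfin : ⟪y, Acl (Q w)⟫ ≤ 0 := by linarith
    rw [t1, t2]
    have t1' : ⟪y, Acl (Q w)⟫ = ⟪adjoint T (xb' s), Q w⟫ := t1.symm
    linarith [t1', hfin]
  have hanti : h t ≤ h 0 := by
    have : AntitoneOn h (Set.Icc 0 t) := by
      apply antitoneOn_of_deriv_nonpos (convex_Icc 0 t)
      · exact fun s _ => (hhd s).continuousAt.continuousWithinAt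
      · intro s hs
        exact ((hhd s).differentiableAt).differentiableWithinAt
      · intro s hs
        rw [interior_Icc] at hs
        rw [(hhd s).deriv]
        exact hderiv_nonpos s (le_of_lt hs.1)
    exact this (Set.left_mem_Icc.2 ht) (Set.right_mem_Icc.2 ht) ht
  -- Step 3: h 0 ≤ ‖vb‖²
  have hh0 : h 0 ≤ ‖vb‖ ^ 2 := by
    set w0 := adjoint Ccl vb with hw0
    have hC := hc vb (-w0)
    have e0 : C (Q (-w0)) + D (Z (-w0)) = -(Ccl (Q w0)) := by
      rw [hCclQ w0]; simp only [map_neg]; abel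
    rw [e0] at hC
    have e1 : ⟪vb, -(Ccl (Q w0))⟫ = -⟪w0, Q w0⟫ := by
      rw [inner_neg_right, real_inner_comm, ← adjoint_inner_right Ccl, ← hw0, real_inner_comm]
    have e2 : ⟪-w0, Q (-w0)⟫ = ⟪w0, Q w0⟫ := by
      rw [map_neg, inner_neg_neg]
    rw [e1, e2] at hC
    have e3 : h 0 = ⟪w0, Q w0⟫ := by
      show ⟪adjoint T (xb 0), Q (adjoint T (xb 0))⟫ = _
      rw [h0]
    rw [e3]; linarith
  -- Step 4: ‖B* (xb t)‖² ≤ γ² * h t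
  have hBb : ‖adjoint B (xb t)‖ ^ 2 ≤ γ ^ 2 * h t := by
    have hM := hb.inner_nonneg_left (xb t)
    simp only [sub_apply, smul_apply, comp_apply, RCLike.re_to_real] at hM
    have e1 : ⟪γ ^ 2 • T (Q (adjoint T (xb t))) - B (adjoint B (xb t)), xb t⟫
        = γ ^ 2 * h t - ‖adjoint B (xb t)‖ ^ 2 := by
      rw [inner_sub_left, real_inner_smul_left]
      congr 1
      · congr 1
        show ⟪T (Q (adjoint T (xb t))), xb t⟫ = ⟪adjoint T (xb t), Q (adjoint T (xb t))⟫
        rw [← adjoint_inner_right T, real_inner_comm]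
      · rw [← adjoint_inner_right B, real_inner_self_eq_norm_sq]
    rw [e1] at hM
    linarith
  -- Step 5: combine
  have hvb_nonneg : (0:ℝ) ≤ ‖vb‖ := norm_nonneg _
  have hB_nonneg : (0:ℝ) ≤ ‖adjoint B (xb t)‖ := norm_nonneg _
  have hBle : ‖adjoint B (xb t)‖ ≤ γ * ‖vb‖ := by
    have h1 : ‖adjoint B (xb t)‖ ^ 2 ≤ (γ * ‖vb‖) ^ 2 := by
      have : γ ^ 2 * h t ≤ γ ^ 2 * ‖vb‖ ^ 2 := by
        have := hanti.trans hh0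
        nlinarith [sq_nonneg γ]
      nlinarith
    nlinarith [mul_nonneg (le_of_lt hγ) hvb_nonneg]
  have hfinal : ‖vb‖ ^ 2 ≤ γ * ‖vb‖ * ‖v‖ := by
    have hcs : ⟪adjoint B (xb t), v⟫ ≤ ‖adjoint B (xb t)‖ * ‖v‖ := real_inner_le_norm _ _
    have := hpair
    rw [real_inner_self_eq_norm_sq] at this
    nlinarith [norm_nonneg v]
  show ‖vb‖ ≤ γ * ‖v‖
  rcases eq_or_lt_of_le hvb_nonneg with hz | hz
  · rw [← hz]
    positivity
  · nlinarith
end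

section
/- Let γ > 0, let Q : H →L[ℝ] H possess a continuous linear inverse Q⁻¹ and satisfy T ∘ Q = Q* ∘ T* with T ∘ Q positive, let Z : H →L[ℝ] U, and set K := Z ∘ Q⁻¹, A_cl := A + B₂ ∘ K, C_cl := C + D ∘ K. Assume (a) A ∘ Q + B₂ ∘ Z + Q* ∘ A* + Z* ∘ B₂* ⪯ 0; (b) for all u ∈ E and y ∈ H, γ²·‖u‖² + 2·⟪u, B* y⟫ + ⟪y, (Q* ∘ T*) y⟫ ≥ 0; (c) for all u ∈ F and y ∈ H, ‖u‖² + 2·⟪u, C (Q y) + D (Z y)⟫ + ⟪y, (Q* ∘ T*) y⟫ ≥ 0. Then for every v̄ ∈ F and every differentiable x̄ : ℝ → H with derivative x̄' satisfying T* (x̄' t) = A_cl* (x̄ t) for all t ≥ 0 and T* (x̄ 0) = C_cl* v̄, one has ‖B* (x̄ t)‖ ≤ γ · ‖v̄‖ for all t ≥ 0. (Corollary 1(ii), dual form: the non-coercive synthesis conditions certify the impulse-to-peak bound for the dual of the closed-loop PIE under state feedback u = K x.) -/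
open ContinuousLinearMap
open scoped RealInnerProductSpace

/-- Corollary 1(ii), dual form: the non-coercive synthesis conditions certify the
impulse-to-peak bound for the dual of the closed-loop PIE under state feedback
`u = K x`. -/
theorem stmt_17
    {H E F U : Type*}
    [NormedAddCommGroup H] [InnerProductSpace ℝ H] [CompleteSpace H]
    [NormedAddCommGroup E] [InnerProductSpace ℝ E] [FiniteDimensional ℝ E]
    [NormedAddCommGroup F] [InnerProductSpace ℝ F] [FiniteDimensional ℝ F]
    [NormedAddCommGroup U] [InnerProductSpace ℝ U] [FiniteDimensional ℝ U]
    (T A : H →L[ℝ] H) (B : E →L[ℝ] H) (B₂ : U →L[ℝ] H)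
    (C : H →L[ℝ] F) (D : U →L[ℝ] F)
    (γ : ℝ) (hγ : 0 < γ)
    (Q : H →L[ℝ] H)
    (Qinv : H →L[ℝ] H)
    (hQinv₁ : Q ∘L Qinv = ContinuousLinearMap.id ℝ H)
    (hQinv₂ : Qinv ∘L Q = ContinuousLinearMap.id ℝ H)
    (hQT : T ∘L Q = adjoint Q ∘L adjoint T)
    (hQTpos : (T ∘L Q).IsPositive)
    (Z : H →L[ℝ] U)
    (ha : ((0 : H →L[ℝ] H) -
      (A ∘L Q + B₂ ∘L Z + adjoint Q ∘L adjoint A +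
        adjoint Z ∘L adjoint B₂)).IsPositive)
    (hb : ∀ (u : E) (y : H),
      γ ^ 2 * ‖u‖ ^ 2 + 2 * ⟪u, adjoint B y⟫ + ⟪y, (adjoint Q ∘L adjoint T) y⟫ ≥ 0)
    (hc : ∀ (u : F) (y : H),
      ‖u‖ ^ 2 + 2 * ⟪u, C (Q y) + D (Z y)⟫ + ⟪y, (adjoint Q ∘L adjoint T) y⟫ ≥ 0)
    (vb : F) (xb xb' : ℝ → H)
    (hxbderiv : ∀ t : ℝ, HasDerivAt xb (xb' t) t)
    (hxbdyn : ∀ t ≥ (0 : ℝ),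
      adjoint T (xb' t) = adjoint (A + B₂ ∘L (Z ∘L Qinv)) (xb t))
    (hxb0 : adjoint T (xb 0) = adjoint (C + D ∘L (Z ∘L Qinv)) vb) :
    ∀ t ≥ (0 : ℝ), ‖adjoint B (xb t)‖ ≤ γ * ‖vb‖ := by
  intro t ht
  set Acl : H →L[ℝ] H := A + B₂ ∘L (Z ∘L Qinv) with hAcl
  set M : H →L[ℝ] H := adjoint Q ∘L adjoint T with hM
  set v : ℝ → ℝ := fun s => ⟪xb s, M (xb s)⟫ with hv
  have hQinvQ : ∀ y : H, Qinv (Q y) = y := by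
    intro y
    have := ContinuousLinearMap.ext_iff.mp hQinv₂ y
    simpa using this
  have hAclQ : ∀ y : H, Acl (Q y) = A (Q y) + B₂ (Z y) := by
    intro y
    simp [hAcl, hQinvQ y]
  -- the quadratic form of the closed-loop Lyapunov inequality
  have hSle : ∀ y : H, ⟪Acl (Q y), y⟫ ≤ 0 := by
    intro y
    have h1 := ha.inner_nonneg_left y
    have h2 : (0 : ℝ) ≤ ⟪-((A ∘L Q + B₂ ∘L Z + adjoint Q ∘L adjoint A +
        adjoint Z ∘L adjoint B₂) y), y⟫ := by
      simpa using h1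
    rw [inner_neg_left] at h2
    have h3 : ⟪(A ∘L Q + B₂ ∘L Z + adjoint Q ∘L adjoint A +
        adjoint Z ∘L adjoint B₂) y, y⟫ = 2 * ⟪Acl (Q y), y⟫ := by
      simp only [ContinuousLinearMap.add_apply, ContinuousLinearMap.comp_apply,
        inner_add_left, hAclQ y]
      rw [ContinuousLinearMap.adjoint_inner_left, ContinuousLinearMap.adjoint_inner_left,
        ContinuousLinearMap.adjoint_inner_left, ContinuousLinearMap.adjoint_inner_left]
      rw [real_inner_comm y (A (Q y)), real_inner_comm y (B₂ (Z y))]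
      ring
    rw [h3] at h2
    linarith
  -- derivative of v
  have hderiv : ∀ s : ℝ, HasDerivAt v (⟪xb s, M (xb' s)⟫ + ⟪xb' s, M (xb s)⟫) s := by
    intro s
    exact HasDerivAt.inner ℝ (hxbderiv s) (M.hasFDerivAt.comp_hasDerivAt s (hxbderiv s))
  -- the derivative is nonpositive on [0, ∞)
  have hnonpos : ∀ s ≥ (0 : ℝ), ⟪xb s, M (xb' s)⟫ + ⟪xb' s, M (xb s)⟫ ≤ 0 := by
    intro s hs
    have hdyn := hxbdyn s hs
    have e1 : ⟪xb s, M (xb' s)⟫ = ⟪Acl (Q (xb s)), xb s⟫ := by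
      rw [hM, ContinuousLinearMap.comp_apply, ContinuousLinearMap.adjoint_inner_right,
        hdyn, ContinuousLinearMap.adjoint_inner_right]
    have e2 : ⟪xb' s, M (xb s)⟫ = ⟪Acl (Q (xb s)), xb s⟫ := by
      have hMT : M (xb s) = T (Q (xb s)) := by rw [← hQT]; rfl
      rw [hMT, ← ContinuousLinearMap.adjoint_inner_left, hdyn,
        ContinuousLinearMap.adjoint_inner_left]
      exact real_inner_comm _ _
    rw [e1, e2]
    have := hSle (xb s)
    linarith
  -- v is antitone on [0, t]
  have hmono : v t ≤ v 0 := by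
    rcases eq_or_lt_of_le ht with h | h
    · rw [← h]
    · have hanti : AntitoneOn v (Set.Icc 0 t) := by
        apply antitoneOn_of_deriv_nonpos (convex_Icc 0 t)
        · exact fun s _ => (hderiv s).continuousAt.continuousWithinAt
        · exact fun s _ => (hderiv s).differentiableAt.differentiableWithinAt
        · intro s hs
          rw [interior_Icc] at hs
          rw [(hderiv s).deriv]
          exact hnonpos s hs.1.le
      exact hanti (Set.left_mem_Icc.mpr ht) (Set.right_mem_Icc.mpr ht) ht
  -- v 0 ≤ ‖vb‖ ^ 2
  have hv0 : v 0 = ⟪C (Q (xb 0)) + D (Z (xb 0)), vb⟫ := by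
    have e1 : v 0 = ⟪Q (xb 0), adjoint T (xb 0)⟫ := by
      rw [hv]
      simp only [hM, ContinuousLinearMap.comp_apply]
      rw [ContinuousLinearMap.adjoint_inner_right]
    rw [e1, hxb0, ContinuousLinearMap.adjoint_inner_right]
    congr 1
    simp [hQinvQ (xb 0)]
  have hv0le : v 0 ≤ ‖vb‖ ^ 2 := by
    have := hc (-vb) (xb 0)
    rw [inner_neg_left] at this
    have hsym : ⟪vb, C (Q (xb 0)) + D (Z (xb 0))⟫ = v 0 := by
      rw [hv0, real_inner_comm]
    simp only [norm_neg] at this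
    rw [hsym] at this
    have hvM : ⟪xb 0, M (xb 0)⟫ = v 0 := rfl
    rw [hvM] at this
    linarith
  -- v s bounds ‖adjoint B (xb s)‖ ^ 2 / γ ^ 2
  set w := adjoint B (xb t) with hw
  have hbound : ‖w‖ ^ 2 ≤ γ ^ 2 * v t := by
    have hγ2 : (0 : ℝ) < γ ^ 2 := by positivity
    have := hb (-((γ ^ 2)⁻¹ • w)) (xb t)
    rw [inner_neg_left, real_inner_smul_left] at this
    have hvM : ⟪xb t, M (xb t)⟫ = v t := rfl
    rw [hvM, real_inner_self_eq_norm_sq] at this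
    simp only [norm_neg, norm_smul, norm_inv, norm_pow, Real.norm_eq_abs, abs_of_pos hγ] at this
    have h2 : γ ^ 2 * ((γ ^ 2)⁻¹ * ‖w‖) ^ 2 = (γ ^ 2)⁻¹ * ‖w‖ ^ 2 := by
      have hne : (γ : ℝ) ^ 2 ≠ 0 := ne_of_gt hγ2
      field_simp
    rw [h2] at this
    have h3 : (γ ^ 2)⁻¹ * ‖w‖ ^ 2 ≤ v t := by linarith
    have h4 : γ ^ 2 * ((γ ^ 2)⁻¹ * ‖w‖ ^ 2) = ‖w‖ ^ 2 := by
      rw [← mul_assoc, mul_inv_cancel₀ (ne_of_gt hγ2), one_mul]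
    have h5 := mul_le_mul_of_nonneg_left h3 hγ2.le
    rw [h4] at h5
    exact h5
  have hfinal : ‖w‖ ^ 2 ≤ (γ * ‖vb‖) ^ 2 := by
    have hγ2 : (0 : ℝ) ≤ γ ^ 2 := by positivity
    have h6 : γ ^ 2 * v t ≤ γ ^ 2 * ‖vb‖ ^ 2 :=
      mul_le_mul_of_nonneg_left (hmono.trans hv0le) hγ2
    have h7 : (γ * ‖vb‖) ^ 2 = γ ^ 2 * ‖vb‖ ^ 2 := by ring
    rw [h7]
    exact hbound.trans h6
  have h8 : (0 : ℝ) ≤ γ * ‖vb‖ := mul_nonneg hγ.le (norm_nonneg vb)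
  calc ‖w‖ = Real.sqrt (‖w‖ ^ 2) := (Real.sqrt_sq (norm_nonneg w)).symm
    _ ≤ Real.sqrt ((γ * ‖vb‖) ^ 2) := Real.sqrt_le_sqrt hfinal
    _ = γ * ‖vb‖ := Real.sqrt_sq h8
end
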